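/- arXiv:2202.12489 — 5 statements merged into one kernel-verified Lean document; each statement's English description precedes it below -/
import Mathlib

section
/- Let n ≥ 2 and 1 ≤ k ≤ n−1. For every string s = (a_1, b_1, …, b_l, a_{l+1}) ∈ S_k, set c_j = a_1 + Σ_{i=1}^{j−1}(b_i + a_{i+1}) and let {i_1 < i_2 < ⋯ < i_k} = ∪_{j=1}^{l} {c_j+1, c_j+2, …, c_j+b_j−1}. Then φ(s) = Ψ(e_{i_1}, e_{i_2}, …, e_{i_k}). In particular, the set {φ(s) : s ∈ S_k} coincides with the set of iterated products Ψ(e_{i_1}, …, e_{i_k}) over all strictly increasing tuples 1 ≤ i_1 < ⋯ < i_k ≤ n−1. -/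
open scoped BigOperators

set_option maxHeartbeats 1000000
set_option synthInstance.maxHeartbeats 400000

noncomputable section

/-- The ground field `K = ℂ(q)`. -/
abbrev K : Type := RatFunc ℂ

/-- The variable `q` of `K = ℂ(q)`. -/
def q : K := RatFunc.X

/-- `T n` models the `n`-th tensor power of the vector representation of
`U_q(gl(1|1))`, as functions on binary strings of length `n`. -/
abbrev T (n : ℕ) : Type := (Fin n → Fin 2) → K

/-- The standard basis vector `v_α` of `T n`. -/
def v (n : ℕ) (α : Fin n → Fin 2) : T n := fun β => if β = α then 1 else 0

/-- `v₀^{⊗ n}`, the basis vector of the all-zeroes string. -/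
def v0 (n : ℕ) : T n := v n (fun _ => 0)

/-- `w n i` is the basis vector whose string has a single `1` in (1-indexed) position `i`. -/
def w (n i : ℕ) : T n := v n (fun j => if (j : ℕ) + 1 = i then 1 else 0)

/-- `e i = -w_i + q⁻¹ w_{i+1}`. -/
def e (n i : ℕ) : T n := -(w n i) + q⁻¹ • w n (i + 1)

/-- The `R`-matrix on a pair of strands: entry `Rmat out inp`. -/
def Rmat : Fin 2 × Fin 2 → Fin 2 × Fin 2 → K := fun out inp =>
  if inp = (0, 0) then (if out = (0, 0) then q else 0)
  else if inp = (1, 0) then (if out = (0, 1) then 1 else 0)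
  else if inp = (0, 1) then
    (if out = (1, 0) then 1 else if out = (0, 1) then q - q⁻¹ else 0)
  else (if out = (1, 1) then -q⁻¹ else 0)

/-- The `R`-matrix acting at positions `i`, `j` (0-indexed) of `T n`. -/
def PhiAux (n : ℕ) (i j : Fin n) : T n →ₗ[K] T n where
  toFun f := fun β => ∑ p : Fin 2 × Fin 2,
    Rmat (β i, β j) p * f (Function.update (Function.update β i p.1) j p.2)
  map_add' f g := by
    funext β
    try dsimp only
    simp only [Pi.add_apply]
    rw [← Finset.sum_add_distrib]
    exact Finset.sum_congr rfl fun p _ => by simp [mul_add]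
  map_smul' c f := by
    funext β
    try dsimp only
    simp only [Pi.smul_apply, smul_eq_mul, RingHom.id_apply]
    rw [Finset.mul_sum]
    exact Finset.sum_congr rfl fun p _ => by ring

/-- `Phi n t` is the map induced by the braid generator `σ_t` (with `1 ≤ t ≤ n-1`),
acting through the `R`-matrix at (1-indexed) positions `(t, t+1)`. -/
def Phi (n t : ℕ) : T n →ₗ[K] T n :=
  if h : 0 < t ∧ t < n then PhiAux n ⟨t - 1, by omega⟩ ⟨t, h.2⟩ else 0

/-- The action of `E` on `T n`. -/
def En (n : ℕ) : T n →ₗ[K] T n where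
  toFun f := fun β => ∑ i : Fin n,
    if β i = 0 then
      ((-1 : K) ^ (Finset.univ.filter (fun j : Fin n => j < i ∧ β j = 1)).card
        * q⁻¹ ^ (n - 1 - (i : ℕ))) * f (Function.update β i 1)
    else 0
  map_add' f g := by
    funext β
    try dsimp only
    simp only [Pi.add_apply]
    rw [← Finset.sum_add_distrib]
    refine Finset.sum_congr rfl fun i _ => ?_
    by_cases h : β i = 0 <;> simp [h, mul_add]
  map_smul' c f := by
    funext β
    try dsimp only
    simp only [Pi.smul_apply, smul_eq_mul, RingHom.id_apply]
    rw [Finset.mul_sum]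
    refine Finset.sum_congr rfl fun i _ => ?_
    by_cases h : β i = 0 <;> simp [h] <;> ring

/-- The action of `F` on `T n`. -/
def Fn (n : ℕ) : T n →ₗ[K] T n where
  toFun f := fun β => ∑ i : Fin n,
    if β i = 1 then
      ((-1 : K) ^ (Finset.univ.filter (fun j : Fin n => j < i ∧ β j = 1)).card
        * q ^ (i : ℕ)) * f (Function.update β i 0)
    else 0
  map_add' f g := by
    funext β
    try dsimp only
    simp only [Pi.add_apply]
    rw [← Finset.sum_add_distrib]
    refine Finset.sum_congr rfl fun i _ => ?_
    by_cases h : β i = 1 <;> simp [h, mul_add]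
  map_smul' c f := by
    funext β
    try dsimp only
    simp only [Pi.smul_apply, smul_eq_mul, RingHom.id_apply]
    rw [Finset.mul_sum]
    refine Finset.sum_congr rfl fun i _ => ?_
    by_cases h : β i = 1 <;> simp [h] <;> ring

/-- The number of `1`s in a binary string. -/
def wt {n : ℕ} (α : Fin n → Fin 2) : ℕ := (Finset.univ.filter (fun i => α i = 1)).card

/-- `Tk n k` is the span of the basis vectors with exactly `k` entries equal to `1`. -/
def Tk (n k : ℕ) : Submodule K (T n) :=
  Submodule.span K {f : T n | ∃ α, wt α = k ∧ f = v n α}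

/-- `Hk n k` is the space of highest weight vectors of weight `(n-k)ε₁ + kε₂`. -/
def Hk (n k : ℕ) : Submodule K (T n) := LinearMap.ker (En n) ⊓ Tk n k

/-- The bilinear product `m` on `T n`. -/
def mul2 (n : ℕ) (f g : T n) : T n := fun γ =>
  ∑ α : Fin n → Fin 2,
    if (∀ i, α i = 1 → γ i = 1) then
      ((-1 : K) ^ (∑ p ∈ Finset.univ.filter (fun p : Fin n × Fin n => p.1 < p.2),
          (((fun i => if α i = 1 then 0 else γ i) p.1 : Fin 2) : ℕ) * ((α p.2 : Fin 2) : ℕ)))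
        * f α * g (fun i => if α i = 1 then 0 else γ i)
    else 0

/-- The left-iterated product `Ψ(u_1, …, u_k) = m(…m(m(u_1,u_2),u_3)…,u_k)`. -/
def Psi (n : ℕ) : (k : ℕ) → (Fin k → T n) → T n
  | 0, _ => v0 n
  | 1, u => u 0
  | (k + 2), u => mul2 n (Psi n (k + 1) (fun i => u i.castSucc)) (u (Fin.last (k + 1)))

/-- Concatenation (tensor product) `T a ⊗ T b → T (a + b)`. -/
def conc {a b : ℕ} (f : T a) (g : T b) : T (a + b) := fun γ =>
  f (fun i => γ (Fin.castAdd b i)) * g (fun i => γ (Fin.natAdd a i))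

/-- Identification `T a ≃ T b` for `a = b`. -/
def castT {a b : ℕ} (h : a = b) (f : T a) : T b := fun γ => f (fun i => γ (Fin.cast h i))

/-- The block vector `Θ_b = Σ_{r=0}^{b-1} (-1)^r q^{-(b-1-r)} v_{β(r)}`. -/
def Theta (b : ℕ) : T b :=
  ∑ r : Fin b, ((-1 : K) ^ (r : ℕ) * q⁻¹ ^ (b - 1 - (r : ℕ))) •
    v b (fun i => if i = r then 0 else 1)

/-- The map induced by the braid `λ = σ_{n-1} ⋯ σ_1`. -/
def Lam (n : ℕ) : T n →ₗ[K] T n :=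
  ((List.range (n - 1)).map (fun t => Phi n (t + 1))).foldl (fun acc g => g ∘ₗ acc) LinearMap.id

/-- The Vandermonde-type matrix `B(n)`. -/
def B (n : ℕ) : Matrix (Fin n) (Fin n) K :=
  fun i j => q ^ ((i : ℤ) * (n : ℤ) * ((n : ℤ) - 1 - 2 * (j : ℤ)))

/-- `C(n) = B(n)⁻¹`. -/
def Cmat (n : ℕ) : Matrix (Fin n) (Fin n) K := (B n)⁻¹

/-- A combinatorial string `(a_1, b_1, a_2, b_2, …, b_l, a_{l+1})`. -/
structure GString where
  l : ℕ
  a : Fin (l + 1) → ℕ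
  b : Fin l → ℕ

/-- Membership of a string in `S_k` (for strands number `n`). -/
def memSk (n k : ℕ) (s : GString) : Prop :=
  (∀ i, 2 ≤ s.b i) ∧ (∑ i, (s.b i - 1)) = k ∧ ((∑ i, s.a i) + ∑ i, s.b i) = n

/-- The length of the string, computed blockwise. -/
def lenOf : (l : ℕ) → (Fin (l + 1) → ℕ) → (Fin l → ℕ) → ℕ
  | 0, a, _ => a 0
  | (l + 1), a, b => (a 0 + b 0) + lenOf l (fun i => a i.succ) (fun i => b i.succ)

/-- The concatenation `v₀^{⊗a_1} ⊗ Θ_{b_1} ⊗ ⋯ ⊗ Θ_{b_l} ⊗ v₀^{⊗a_{l+1}}`. -/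
def rawphi : (l : ℕ) → (a : Fin (l + 1) → ℕ) → (b : Fin l → ℕ) → T (lenOf l a b)
  | 0, a, _ => v0 (a 0)
  | (l + 1), a, b =>
      conc (conc (v0 (a 0)) (Theta (b 0)))
        (rawphi l (fun i => a i.succ) (fun i => b i.succ))

/-- `φ(s) ∈ T n`, the vector associated to a string `s`. -/
def phi (n : ℕ) (s : GString) : T n :=
  if h : lenOf s.l s.a s.b = n then castT h (rawphi s.l s.a s.b) else 0

/-!
Write `v_S` for the basis vector with `1`s exactly at the positions in `S`. If `S` lies to the
left of `j`, then `m(v_S, e_j) = -v_{S ∪ {j}} + q⁻¹ v_{S ∪ {j+1}}`, while if `j` is the largest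
element of `S` only the second term survives. Hence multiplying `v_S` successively by
`e_{c+1}, …, e_{c+m}` produces `v_S ⊗ Θ_{m+1}` with the block `Θ_{m+1}` at positions
`c+1, …, c+m+1`: each new factor either extends the hole-free term by a `1` or a hole, or extends
a term with a hole by a `1`. The indices of `s ∈ S_k` form maximal runs of consecutive integers,
one for each block `Θ_{b_j}`, separated by gaps, so `Ψ(e_{i_1}, …, e_{i_k})` expands to the
concatenation `φ(s)`. Conversely every increasing tuple splits into such runs.
-/

def vSet (n : ℕ) (S : Finset ℕ) : T n := v n fun i => if (i : ℕ) + 1 ∈ S then 1 else 0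

@[simp] lemma vSet_empty (n : ℕ) : vSet n ∅ = v0 n := by simp [vSet, v0]

section Product

variable {n : ℕ}

lemma mul2_add_left (f g h : T n) : mul2 n (f + g) h = mul2 n f h + mul2 n g h := by
  funext γ
  simp only [mul2, Pi.add_apply, ← Finset.sum_add_distrib]
  exact Finset.sum_congr rfl fun α _ => by split <;> ring

lemma mul2_smul_left (c : K) (f h : T n) : mul2 n (c • f) h = c • mul2 n f h := by
  funext γ
  simp only [mul2, Pi.smul_apply, smul_eq_mul, Finset.mul_sum]
  exact Finset.sum_congr rfl fun α _ => by split <;> ring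

lemma mul2_add_right (f g h : T n) : mul2 n f (g + h) = mul2 n f g + mul2 n f h := by
  funext γ
  simp only [mul2, Pi.add_apply, ← Finset.sum_add_distrib]
  exact Finset.sum_congr rfl fun α _ => by split <;> ring

lemma mul2_smul_right (c : K) (f h : T n) : mul2 n f (c • h) = c • mul2 n f h := by
  funext γ
  simp only [mul2, Pi.smul_apply, smul_eq_mul, Finset.mul_sum]
  exact Finset.sum_congr rfl fun α _ => by split <;> ring

lemma mul2_neg_right (f h : T n) : mul2 n f (-h) = -mul2 n f h := by
  simpa using mul2_smul_right (-1) f h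

lemma mul2_sum_left {ι : Type*} (s : Finset ι) (f : ι → T n) (g : T n) :
    mul2 n (∑ i ∈ s, f i) g = ∑ i ∈ s, mul2 n (f i) g := by
  classical
  induction s using Finset.induction_on with
  | empty => simpa using mul2_smul_left 0 0 g
  | insert a s ha ih => rw [Finset.sum_insert ha, Finset.sum_insert ha, mul2_add_left, ih]

lemma foldl_mul2_smul (c : K) (x : T n) (us : List (T n)) :
    us.foldl (mul2 n) (c • x) = c • us.foldl (mul2 n) x := by
  induction us generalizing x with
  | nil => rfl
  | cons u us ih => simp only [List.foldl_cons, mul2_smul_left, ih]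

lemma foldl_mul2_sum {ι : Type*} (s : Finset ι) (f : ι → T n) (us : List (T n)) :
    us.foldl (mul2 n) (∑ i ∈ s, f i) = ∑ i ∈ s, us.foldl (mul2 n) (f i) := by
  induction us generalizing f with
  | nil => rfl
  | cons u us ih => simp only [List.foldl_cons, mul2_sum_left, ih]

lemma mul2_v_left (α : Fin n → Fin 2) (g : T n) (γ : Fin n → Fin 2) :
    mul2 n (v n α) g γ =
      if ∀ i, α i = 1 → γ i = 1 then
        (-1 : K) ^ (∑ p ∈ Finset.univ.filter (fun p : Fin n × Fin n => p.1 < p.2),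
            ((if α p.1 = 1 then 0 else γ p.1 : Fin 2) : ℕ) * ((α p.2 : Fin 2) : ℕ))
          * g (fun i => if α i = 1 then 0 else γ i)
      else 0 := by
  rw [mul2, Finset.sum_eq_single α (fun β _ hβ => by simp [v, hβ]) (by simp)]
  simp [v]

lemma mul2_v0_left (g : T n) : mul2 n (v0 n) g = g := by
  funext γ
  simp [v0, mul2_v_left]

lemma mul2_v_v (α β : Fin n → Fin 2) :
    mul2 n (v n α) (v n β) =
      if ∀ i, ¬(α i = 1 ∧ β i = 1) then
        (-1 : K) ^ (∑ p ∈ Finset.univ.filter (fun p : Fin n × Fin n => p.1 < p.2),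
            ((β p.1 : Fin 2) : ℕ) * ((α p.2 : Fin 2) : ℕ)) • v n (α + β)
      else 0 := by
  funext γ
  have key : ((∀ i, α i = 1 → γ i = 1) ∧ (fun i => if α i = 1 then 0 else γ i) = β) ↔
      (∀ i, ¬(α i = 1 ∧ β i = 1)) ∧ γ = α + β := by
    simp only [funext_iff, ← forall_and, Pi.add_apply]
    refine forall_congr' fun i => ?_
    generalize α i = x, β i = y, γ i = z
    revert x y z
    decide
  rw [mul2_v_left]
  by_cases h : (∀ i, α i = 1 → γ i = 1) ∧ (fun i => if α i = 1 then 0 else γ i) = β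
  · obtain ⟨hdisj, hγ⟩ := key.1 h
    have hR : ∀ i, (if α i = 1 then 0 else γ i) = β i := fun i => congrFun h.2 i
    simp only [if_pos h.1, hR, if_pos hdisj, Pi.smul_apply, v, if_pos hγ, smul_eq_mul]
    simp
  · have hγ : ¬((∀ i, ¬(α i = 1 ∧ β i = 1)) ∧ γ = α + β) := fun h' => h (key.2 h')
    split_ifs <;> simp_all [v]

lemma mul2_vSet_w {S : Finset ℕ} {j : ℕ} (hS : ∀ x ∈ S, x < j) :
    mul2 n (vSet n S) (w n j) = vSet n (insert j S) := by
  have hj : j ∉ S := fun h => lt_irrefl j (hS j h)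
  have hdisj : ∀ i : Fin n, ¬((if (i : ℕ) + 1 ∈ S then 1 else 0 : Fin 2) = 1 ∧
      (if (i : ℕ) + 1 = j then 1 else 0 : Fin 2) = 1) := by
    intro i
    split_ifs with h1 h2 <;> simp_all
  have hsign : ∑ p ∈ Finset.univ.filter (fun p : Fin n × Fin n => p.1 < p.2),
      (((if (p.1 : ℕ) + 1 = j then 1 else 0 : Fin 2) : ℕ) *
        ((if (p.2 : ℕ) + 1 ∈ S then 1 else 0 : Fin 2) : ℕ)) = 0 := by
    refine Finset.sum_eq_zero fun p hp => ?_
    have hlt : p.1 < p.2 := (Finset.mem_filter.mp hp).2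
    split_ifs with h1 h2 <;> first | rfl | (have := hS _ h2; omega)
  rw [vSet, w, mul2_v_v, if_pos hdisj, hsign, pow_zero, one_smul, vSet]
  congr 1
  funext i
  by_cases h1 : (i : ℕ) + 1 ∈ S
  · have : (i : ℕ) + 1 ≠ j := fun h => hj (h ▸ h1)
    simp [h1, this]
  · by_cases h2 : (i : ℕ) + 1 = j <;> simp [h1, h2, hj]

lemma mul2_vSet_w_of_mem {S : Finset ℕ} {j : ℕ} (hjS : j ∈ S) (hj : 1 ≤ j) (hjn : j ≤ n) :
    mul2 n (vSet n S) (w n j) = 0 := by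
  rw [vSet, w, mul2_v_v, if_neg]
  push Not
  exact ⟨⟨j - 1, by omega⟩, by simp [Nat.sub_add_cancel hj, hjS]⟩

lemma mul2_vSet_e {S : Finset ℕ} {j : ℕ} (hS : ∀ x ∈ S, x < j) :
    mul2 n (vSet n S) (e n j) = -vSet n (insert j S) + q⁻¹ • vSet n (insert (j + 1) S) := by
  rw [e, mul2_add_right, mul2_neg_right, mul2_smul_right, mul2_vSet_w hS,
    mul2_vSet_w fun x hx => (hS x hx).trans j.lt_succ_self]

lemma mul2_vSet_e_of_mem {S : Finset ℕ} {j : ℕ} (hjS : j ∈ S) (hj : 1 ≤ j) (hjn : j ≤ n)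
    (hS : ∀ x ∈ S, x ≤ j) : mul2 n (vSet n S) (e n j) = q⁻¹ • vSet n (insert (j + 1) S) := by
  rw [e, mul2_add_right, mul2_neg_right, mul2_smul_right, mul2_vSet_w_of_mem hjS hj hjn,
    mul2_vSet_w fun x hx => Nat.lt_succ_of_le (hS x hx), neg_zero, zero_add]

end Product

lemma Psi_eq_foldl {n : ℕ} : ∀ (k : ℕ) (u : Fin k → T n),
    Psi n k u = (List.ofFn u).foldl (mul2 n) (v0 n)
  | 0, _ => rfl
  | 1, u => (mul2_v0_left (u 0)).symm
  | k + 2, u => by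
    rw [Psi, Psi_eq_foldl (k + 1), List.ofFn_succ' u, List.concat_eq_append, List.foldl_concat]

/-- The string `β(r)` of `Θ_{m+1}`, shifted `c` positions to the right. -/
def hole (c m r : ℕ) : Finset ℕ := (Finset.Icc (c + 1) (c + m + 1)).erase (c + r + 1)

lemma hole_succ_of_le {c m r : ℕ} (hr : r ≤ m) :
    hole c (m + 1) r = insert (c + m + 2) (hole c m r) := by
  ext x
  simp only [hole, Finset.mem_insert, Finset.mem_erase, Finset.mem_Icc]
  omega

lemma hole_succ_self (c m : ℕ) : hole c (m + 1) (m + 1) = insert (c + m + 1) (hole c m m) := by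
  ext x
  simp only [hole, Finset.mem_insert, Finset.mem_erase, Finset.mem_Icc]
  omega

lemma le_of_mem_union_hole {S : Finset ℕ} {c₀ c m r x : ℕ} (hS : ∀ x ∈ S, x ≤ c₀) (hc : c₀ ≤ c)
    (hx : x ∈ S ∪ hole c m r) : x ≤ c + m + 1 := by
  rcases Finset.mem_union.mp hx with h | h
  · have := hS x h; omega
  · simp only [hole, Finset.mem_erase, Finset.mem_Icc] at h; omega

section Run

variable {n : ℕ} {S : Finset ℕ} {c m : ℕ}

lemma mul2_vSet_hole_e (hS : ∀ x ∈ S, x ≤ c) (hn : c + m + 2 ≤ n) {r : ℕ} (hr : r ≤ m) :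
    mul2 n (vSet n (S ∪ hole c m r)) (e n (c + m + 1)) =
      q⁻¹ • vSet n (S ∪ hole c (m + 1) r)
        - if r = m then vSet n (S ∪ hole c (m + 1) (m + 1)) else 0 := by
  rw [hole_succ_of_le hr, Finset.union_insert]
  split_ifs with hrm
  · subst hrm
    have hlt : ∀ x ∈ S ∪ hole c r r, x < c + r + 1 := by
      intro x hx
      rcases Finset.mem_union.mp hx with h | h
      · exact (hS x h).trans_lt (by omega)
      · simp only [hole, Finset.mem_erase, Finset.mem_Icc] at h; omega
    rw [mul2_vSet_e hlt, hole_succ_self, Finset.union_insert]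
    abel
  · have hmem : c + m + 1 ∈ S ∪ hole c m r := by
      simp only [Finset.mem_union, hole, Finset.mem_erase, Finset.mem_Icc]; omega
    rw [mul2_vSet_e_of_mem hmem (by omega) (by omega) fun x hx => le_of_mem_union_hole hS le_rfl hx,
      sub_zero]

lemma foldl_mul2_run (hS : ∀ x ∈ S, x ≤ c) (hn : c + m + 1 ≤ n) :
    ((List.range' (c + 1) m).map (e n)).foldl (mul2 n) (vSet n S) =
      ∑ r ∈ Finset.range (m + 1), ((-1 : K) ^ r * q⁻¹ ^ (m - r)) • vSet n (S ∪ hole c m r) := by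
  induction m with
  | zero => simp [hole]
  | succ m ih =>
    have hstep : ∀ r ∈ Finset.range (m + 1),
        mul2 n (((-1 : K) ^ r * q⁻¹ ^ (m - r)) • vSet n (S ∪ hole c m r)) (e n (c + m + 1)) =
          ((-1 : K) ^ r * q⁻¹ ^ (m + 1 - r)) • vSet n (S ∪ hole c (m + 1) r)
            + if r = m then ((-1 : K) ^ (m + 1) * q⁻¹ ^ 0) • vSet n (S ∪ hole c (m + 1) (m + 1))
              else 0 := by
      intro r hr
      have hr : r ≤ m := Nat.lt_succ_iff.mp (Finset.mem_range.mp hr)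
      rw [mul2_smul_left, mul2_vSet_hole_e hS (by omega) hr, Nat.sub_add_comm hr]
      split_ifs with hrm
      · subst hrm
        rw [Nat.sub_self, smul_sub, smul_smul, sub_eq_add_neg, ← neg_smul]
        congr 2 <;> ring
      · rw [sub_zero, add_zero, smul_smul, pow_succ, mul_assoc]
    rw [List.range'_concat, List.map_append, List.map_singleton, List.foldl_concat, ih (by omega),
      mul2_sum_left, one_mul, show c + 1 + m = c + m + 1 by omega, Finset.sum_congr rfl hstep,
      Finset.sum_add_distrib, Finset.sum_ite_eq' _ m, if_pos (by simp),
      Finset.sum_range_succ _ (m + 1), Nat.sub_self]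

end Run

/-- A block `(c, m)` stands for a `Θ_{m+1}` at positions `c+1, …, c+m+1`; `blockExpansion n S B`
is the standard-basis expansion of the tensor product of the blocks `B` with extra `1`s at `S`. -/
def blockExpansion (n : ℕ) : Finset ℕ → List (ℕ × ℕ) → T n
  | S, [] => vSet n S
  | S, (c, m) :: B => ∑ r ∈ Finset.range (m + 1),
      ((-1 : K) ^ r * q⁻¹ ^ (m - r)) • blockExpansion n (S ∪ hole c m r) B

def BlocksFit (n : ℕ) : ℕ → List (ℕ × ℕ) → Prop
  | c₀, [] => c₀ ≤ n
  | c₀, (c, m) :: B => c₀ ≤ c ∧ BlocksFit n (c + m + 1) B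

lemma BlocksFit.le {n c₀ : ℕ} {B : List (ℕ × ℕ)} (hB : BlocksFit n c₀ B) : c₀ ≤ n := by
  induction B generalizing c₀ with
  | nil => exact hB
  | cons p B ih => exact hB.1.trans (le_trans (by omega) (ih hB.2))

/-- The block `(c, m)` is built by the factors `e_{c+1}, …, e_{c+m}`. -/
def runIndices (B : List (ℕ × ℕ)) : List ℕ := B.flatMap fun p => List.range' (p.1 + 1) p.2

@[simp] lemma runIndices_cons (p : ℕ × ℕ) (B : List (ℕ × ℕ)) :
    runIndices (p :: B) = List.range' (p.1 + 1) p.2 ++ runIndices B := rfl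

lemma foldl_mul2_runIndices {n : ℕ} {S : Finset ℕ} {c₀ : ℕ} {B : List (ℕ × ℕ)}
    (hS : ∀ x ∈ S, x ≤ c₀) (hB : BlocksFit n c₀ B) :
    ((runIndices B).map (e n)).foldl (mul2 n) (vSet n S) = blockExpansion n S B := by
  induction B generalizing S c₀ with
  | nil => rfl
  | cons p B ih =>
    obtain ⟨c, m⟩ := p
    obtain ⟨hc, hB⟩ := hB
    rw [runIndices_cons, List.map_append, List.foldl_append,
      foldl_mul2_run (fun x hx => (hS x hx).trans hc) hB.le, foldl_mul2_sum, blockExpansion]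
    refine Finset.sum_congr rfl fun r _ => ?_
    rw [foldl_mul2_smul, ih (fun x hx => le_of_mem_union_hole hS hc hx) hB]

section Concatenation

variable {a b : ℕ}

lemma conc_v_v (α : Fin a → Fin 2) (β : Fin b → Fin 2) :
    conc (v a α) (v b β) = v (a + b) (Fin.append α β) := by
  funext γ
  have key : ((fun i => γ (Fin.castAdd b i)) = α ∧ (fun i => γ (Fin.natAdd a i)) = β) ↔
      γ = Fin.append α β := by
    constructor
    · rintro ⟨rfl, rfl⟩
      exact Fin.append_castAdd_natAdd.symm
    · rintro rfl
      exact ⟨funext (Fin.append_left α β), funext (Fin.append_right α β)⟩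
  simp only [conc, v, ← key]
  split_ifs <;> simp_all

lemma conc_vSet {S S' : Finset ℕ} (hS : ∀ x ∈ S, x ≤ a) (hS' : ∀ x ∈ S', 1 ≤ x) :
    conc (vSet a S) (vSet b S') = vSet (a + b) (S ∪ S'.image (· + a)) := by
  rw [vSet, vSet, conc_v_v, vSet]
  congr 1
  funext i
  refine Fin.addCases (fun i => ?_) (fun j => ?_) i
  · have : (i : ℕ) + 1 ∉ S'.image (· + a) := by
      simp only [Finset.mem_image, not_exists, not_and]
      intro x hx; have := hS' x hx; omega
    simp [this]
  · have h1 : a + (j : ℕ) + 1 ∉ S := fun h => by have := hS _ h; omega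
    have h2 : a + (j : ℕ) + 1 ∈ S'.image (· + a) ↔ (j : ℕ) + 1 ∈ S' := by
      simp only [Finset.mem_image]
      exact ⟨fun ⟨x, hx, hxe⟩ => by rwa [show (j : ℕ) + 1 = x by omega], fun h => ⟨_, h, by omega⟩⟩
    simp [h1, h2]

lemma conc_smul_left (c : K) (f : T a) (g : T b) : conc (c • f) g = c • conc f g := by
  funext γ; simp only [conc, Pi.smul_apply, smul_eq_mul, mul_assoc]

lemma conc_smul_right (c : K) (f : T a) (g : T b) : conc f (c • g) = c • conc f g := by
  funext γ; simp only [conc, Pi.smul_apply, smul_eq_mul]; ring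

lemma conc_sum_left {ι : Type*} (s : Finset ι) (f : ι → T a) (g : T b) :
    conc (∑ i ∈ s, f i) g = ∑ i ∈ s, conc (f i) g := by
  funext γ; simp only [conc, Finset.sum_apply, Finset.sum_mul]

lemma conc_sum_right {ι : Type*} (s : Finset ι) (f : T a) (g : ι → T b) :
    conc f (∑ i ∈ s, g i) = ∑ i ∈ s, conc f (g i) := by
  funext γ; simp only [conc, Finset.sum_apply, Finset.mul_sum]

lemma image_hole_add (c m r d : ℕ) : (hole c m r).image (· + d) = hole (c + d) m r := by
  ext x
  simp only [hole, Finset.mem_image, Finset.mem_erase, Finset.mem_Icc]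
  exact ⟨fun ⟨y, hy, hyx⟩ => by omega, fun h => ⟨x - d, by omega, by omega⟩⟩

def shiftBlocks (d : ℕ) (B : List (ℕ × ℕ)) : List (ℕ × ℕ) := B.map fun p => (p.1 + d, p.2)

@[simp] lemma shiftBlocks_nil (d : ℕ) : shiftBlocks d [] = [] := rfl

@[simp] lemma shiftBlocks_cons (d c m : ℕ) (B : List (ℕ × ℕ)) :
    shiftBlocks d ((c, m) :: B) = (c + d, m) :: shiftBlocks d B := rfl

lemma conc_vSet_blockExpansion {S S' : Finset ℕ} (B' : List (ℕ × ℕ))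
    (hS : ∀ x ∈ S, x ≤ a) (hS' : ∀ x ∈ S', 1 ≤ x) :
    conc (vSet a S) (blockExpansion b S' B') =
      blockExpansion (a + b) (S ∪ S'.image (· + a)) (shiftBlocks a B') := by
  induction B' generalizing S' with
  | nil => exact conc_vSet hS hS'
  | cons p B' ih =>
    obtain ⟨c, m⟩ := p
    rw [shiftBlocks_cons, blockExpansion, blockExpansion, conc_sum_right]
    refine Finset.sum_congr rfl fun r _ => ?_
    rw [conc_smul_right, ih, Finset.image_union, image_hole_add, Finset.union_assoc]
    intro x hx
    rcases Finset.mem_union.mp hx with h | h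
    · exact hS' x h
    · simp only [hole, Finset.mem_erase, Finset.mem_Icc] at h; omega

lemma conc_blockExpansion {S S' : Finset ℕ} {c₀ : ℕ} {B : List (ℕ × ℕ)} (B' : List (ℕ × ℕ))
    (hS : ∀ x ∈ S, x ≤ c₀) (hB : BlocksFit a c₀ B) (hS' : ∀ x ∈ S', 1 ≤ x) :
    conc (blockExpansion a S B) (blockExpansion b S' B') =
      blockExpansion (a + b) (S ∪ S'.image (· + a)) (B ++ shiftBlocks a B') := by
  induction B generalizing S c₀ with
  | nil =>
    exact conc_vSet_blockExpansion B' (fun x hx => (hS x hx).trans hB.le) hS'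
  | cons p B ih =>
    obtain ⟨c, m⟩ := p
    obtain ⟨hc, hB⟩ := hB
    rw [blockExpansion, List.cons_append, blockExpansion, conc_sum_left]
    refine Finset.sum_congr rfl fun r _ => ?_
    rw [conc_smul_left, ih (fun x hx => le_of_mem_union_hole hS hc hx) hB, Finset.union_right_comm]

end Concatenation

lemma BlocksFit.bounds_of_mem_runIndices {n c₀ : ℕ} {B : List (ℕ × ℕ)} (hB : BlocksFit n c₀ B)
    {x : ℕ} (hx : x ∈ runIndices B) : c₀ < x ∧ x < n := by
  induction B generalizing c₀ with
  | nil => exact absurd hx List.not_mem_nil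
  | cons p B ih =>
    obtain ⟨c, m⟩ := p
    rcases List.mem_append.mp hx with h | h
    · have := hB.1
      have := hB.2.le
      rw [List.mem_range'_1] at h
      omega
    · have := ih hB.2 h
      have := hB.1
      omega

lemma BlocksFit.pairwise_runIndices {n c₀ : ℕ} {B : List (ℕ × ℕ)} (hB : BlocksFit n c₀ B) :
    (runIndices B).Pairwise (· < ·) := by
  induction B generalizing c₀ with
  | nil => exact List.Pairwise.nil
  | cons p B ih =>
    obtain ⟨c, m⟩ := p
    refine List.pairwise_append.mpr ⟨List.pairwise_lt_range', ih hB.2, fun x hx y hy => ?_⟩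
    have := (hB.2.bounds_of_mem_runIndices hy).1
    rw [List.mem_range'_1] at hx
    omega

lemma Theta_eq_blockExpansion {b : ℕ} (hb : 1 ≤ b) :
    Theta b = blockExpansion b ∅ [(0, b - 1)] := by
  rw [Theta, blockExpansion, Nat.sub_add_cancel hb, ← Fin.sum_univ_eq_sum_range]
  refine Finset.sum_congr rfl fun r _ => ?_
  congr 1
  rw [blockExpansion, vSet]
  congr 1
  funext i
  have : (i : ℕ) + 1 ∈ ∅ ∪ hole 0 (b - 1) r ↔ i ≠ r := by
    simp only [Finset.empty_union, hole, Finset.mem_erase, Finset.mem_Icc, ne_eq, Fin.ext_iff]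
    omega
  simp only [this, ite_not]

section Strings

variable {l : ℕ}

def blockOffset (l : ℕ) (a : Fin (l + 1) → ℕ) (b : Fin l → ℕ) (j : Fin l) : ℕ :=
  a 0 + ∑ t ∈ Finset.univ.filter (fun t => t < j), (b t + a t.succ)

def blocks (l : ℕ) (a : Fin (l + 1) → ℕ) (b : Fin l → ℕ) : List (ℕ × ℕ) :=
  List.ofFn fun j => (blockOffset l a b j, b j - 1)

lemma blockOffset_zero (a : Fin (l + 2) → ℕ) (b : Fin (l + 1) → ℕ) :
    blockOffset (l + 1) a b 0 = a 0 := by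
  simp [blockOffset]

lemma blockOffset_succ (a : Fin (l + 2) → ℕ) (b : Fin (l + 1) → ℕ) (j : Fin l) :
    blockOffset (l + 1) a b j.succ =
      blockOffset l (fun i => a i.succ) (fun i => b i.succ) j + (a 0 + b 0) := by
  simp only [blockOffset, Finset.sum_filter, Fin.sum_univ_succ, if_pos (Fin.succ_pos j),
    Fin.succ_lt_succ_iff, Fin.succ_zero_eq_one]
  ring

lemma blocks_succ (a : Fin (l + 2) → ℕ) (b : Fin (l + 1) → ℕ) :
    blocks (l + 1) a b =
      (a 0, b 0 - 1) ::
        shiftBlocks (a 0 + b 0) (blocks l (fun i => a i.succ) (fun i => b i.succ)) := by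
  simp only [blocks, List.ofFn_succ, blockOffset_zero, blockOffset_succ, shiftBlocks, List.map_ofFn]
  rfl

lemma lenOf_eq : ∀ (l : ℕ) (a : Fin (l + 1) → ℕ) (b : Fin l → ℕ),
    lenOf l a b = ∑ i, a i + ∑ i, b i
  | 0, a, b => by simp [lenOf]
  | l + 1, a, b => by
    rw [lenOf, lenOf_eq l, Fin.sum_univ_succ a, Fin.sum_univ_succ b]
    ring

lemma BlocksFit.shift {n c₀ : ℕ} {B : List (ℕ × ℕ)} (hB : BlocksFit n c₀ B) (d : ℕ) :
    BlocksFit (n + d) (c₀ + d) (shiftBlocks d B) := by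
  induction B generalizing c₀ with
  | nil => exact Nat.add_le_add_right hB d
  | cons p B ih =>
    obtain ⟨c, m⟩ := p
    refine ⟨Nat.add_le_add_right hB.1 d, ?_⟩
    rw [show c + d + m + 1 = c + m + 1 + d by omega]
    exact ih hB.2

lemma blocksFit_blocks : ∀ (l : ℕ) (a : Fin (l + 1) → ℕ) (b : Fin l → ℕ), (∀ i, 1 ≤ b i) →
    BlocksFit (lenOf l a b) 0 (blocks l a b)
  | 0, a, _, _ => Nat.zero_le (a 0)
  | l + 1, a, b, hb => by
    rw [blocks_succ]
    refine ⟨Nat.zero_le _, ?_⟩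
    have h := (blocksFit_blocks l (fun i => a i.succ) (fun i => b i.succ)
      fun i => hb i.succ).shift (a 0 + b 0)
    rw [zero_add, Nat.add_comm (lenOf l _ _)] at h
    rwa [show a 0 + (b 0 - 1) + 1 = a 0 + b 0 by have := hb 0; omega]

lemma rawphi_eq_blockExpansion : ∀ (l : ℕ) (a : Fin (l + 1) → ℕ) (b : Fin l → ℕ), (∀ i, 1 ≤ b i) →
    rawphi l a b = blockExpansion (lenOf l a b) ∅ (blocks l a b)
  | 0, _, _, _ => (vSet_empty _).symm
  | l + 1, a, b, hb => by
    have hfit : BlocksFit (a 0 + b 0) 0 [(a 0, b 0 - 1)] :=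
      ⟨Nat.zero_le _, show a 0 + (b 0 - 1) + 1 ≤ a 0 + b 0 by have := hb 0; omega⟩
    rw [rawphi, rawphi_eq_blockExpansion l _ _ fun i => hb i.succ, Theta_eq_blockExpansion (hb 0),
      ← vSet_empty, conc_vSet_blockExpansion _ (by simp) (by simp), shiftBlocks_cons,
      shiftBlocks_nil, zero_add, Finset.image_empty, Finset.union_empty,
      conc_blockExpansion _ (by simp) hfit (by simp), Finset.image_empty, Finset.union_empty,
      blocks_succ, List.singleton_append]
    rfl

lemma toFinset_runIndices_blocks (a : Fin (l + 1) → ℕ) (b : Fin l → ℕ) :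
    (runIndices (blocks l a b)).toFinset = Finset.univ.biUnion fun j =>
      Finset.Ico (blockOffset l a b j + 1) (blockOffset l a b j + b j) := by
  ext x
  simp only [List.mem_toFinset, runIndices, blocks, List.mem_flatMap, List.mem_ofFn,
    List.mem_range'_1, Finset.mem_biUnion, Finset.mem_univ, true_and, Finset.mem_Ico]
  constructor
  · rintro ⟨_, ⟨j, rfl⟩, h⟩; exact ⟨j, by omega⟩
  · rintro ⟨j, h⟩; exact ⟨_, ⟨j, rfl⟩, by omega⟩

lemma length_runIndices_blocks (a : Fin (l + 1) → ℕ) (b : Fin l → ℕ) :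
    (runIndices (blocks l a b)).length = ∑ j, (b j - 1) := by
  simp [runIndices, blocks, List.length_flatMap, List.sum_ofFn]

lemma shiftBlocks_blocks_update_zero (a : Fin (l + 1) → ℕ) (b : Fin l → ℕ) {d : ℕ} (hd : d ≤ a 0) :
    shiftBlocks d (blocks l (Function.update a 0 (a 0 - d)) b) = blocks l a b := by
  simp only [shiftBlocks, blocks, List.map_ofFn]
  congr 1
  funext j
  simp only [Function.comp_apply, blockOffset, Function.update_self,
    Function.update_of_ne (Fin.succ_ne_zero _), Prod.mk.injEq, and_true]
  omega

lemma runIndices_blocks_cons (a : Fin (l + 1) → ℕ) (b : Fin l → ℕ) {j : ℕ} (hj : 1 ≤ j)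
    (ha : j + 1 ≤ a 0) :
    runIndices (blocks (l + 1) (Fin.cons (j - 1) (Function.update a 0 (a 0 - (j + 1))))
      (Fin.cons 2 b)) = j :: runIndices (blocks l a b) := by
  rw [blocks_succ]
  simp only [Fin.cons_zero, Fin.cons_succ, runIndices_cons]
  rw [show j - 1 + 2 = j + 1 by omega, shiftBlocks_blocks_update_zero a b ha,
    show j - 1 + 1 = j by omega]
  rfl

lemma runIndices_blocks_update (a : Fin (l + 2) → ℕ) (b : Fin (l + 1) → ℕ) (ha : 1 ≤ a 0)
    (hb : 1 ≤ b 0) :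
    runIndices (blocks (l + 1) (Function.update a 0 (a 0 - 1)) (Function.update b 0 (b 0 + 1))) =
      a 0 :: runIndices (blocks (l + 1) a b) := by
  rw [blocks_succ, blocks_succ]
  simp only [Function.update_self, Function.update_of_ne (Fin.succ_ne_zero _), runIndices_cons]
  rw [show a 0 - 1 + (b 0 + 1) = a 0 + b 0 by omega, show b 0 + 1 - 1 = b 0 - 1 + 1 by omega,
    List.range'_succ, show a 0 - 1 + 1 = a 0 by omega]
  rfl

end Strings

lemma sum_update_zero {l : ℕ} (f : Fin (l + 1) → ℕ) (x : ℕ) :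
    ∑ i, Function.update f 0 x i + f 0 = x + ∑ i, f i := by
  simp only [Fin.sum_univ_succ, Function.update_self, Function.update_of_ne (Fin.succ_ne_zero _)]
  ring

/-- Adding the indices one at a time from the left, each new index either widens the first block
or opens a new block of width `2`. -/
lemma exists_blocks_runIndices_eq (n : ℕ) : ∀ J : List ℕ, J.Pairwise (· < ·) →
    (∀ x ∈ J, 1 ≤ x ∧ x < n) → ∃ (l : ℕ) (a : Fin (l + 1) → ℕ) (b : Fin l → ℕ),
      (∀ i, 2 ≤ b i) ∧ ∑ i, a i + ∑ i, b i = n ∧ runIndices (blocks l a b) = J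
  | [], _, _ => ⟨0, fun _ => n, Fin.elim0, fun i => i.elim0, by simp, rfl⟩
  | j :: J, hJ, hbd => by
    obtain ⟨hjJ, hJ⟩ := List.pairwise_cons.mp hJ
    obtain ⟨l, a, b, hb, hsum, hrun⟩ :=
      exists_blocks_runIndices_eq n J hJ fun x hx => hbd x (List.mem_cons_of_mem j hx)
    have hj := hbd j List.mem_cons_self
    by_cases ha : j + 1 ≤ a 0
    · refine ⟨l + 1, Fin.cons (j - 1) (Function.update a 0 (a 0 - (j + 1))), Fin.cons 2 b,
        Fin.cases le_rfl hb, ?_, by rw [runIndices_blocks_cons a b hj.1 ha, hrun]⟩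
      have := sum_update_zero a (a 0 - (j + 1))
      rw [Fin.sum_cons, Fin.sum_cons]
      omega
    · cases l with
      | zero =>
        simp only [Fin.sum_univ_succ, Finset.univ_eq_empty, Finset.sum_empty, add_zero] at hsum
        omega
      | succ l =>
        have hfirst : a 0 + 1 ∈ J := by
          rw [← hrun, blocks_succ, runIndices_cons, List.mem_append, List.mem_range'_1]
          have := hb 0
          omega
        have hja : a 0 = j := by have := hjJ _ hfirst; omega
        refine ⟨l + 1, Function.update a 0 (a 0 - 1), Function.update b 0 (b 0 + 1), ?_, ?_, ?_⟩
        · intro i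
          rcases eq_or_ne i 0 with rfl | hi
          · simp only [Function.update_self]; have := hb 0; omega
          · rw [Function.update_of_ne hi]; exact hb i
        · have := sum_update_zero a (a 0 - 1)
          have := sum_update_zero b (b 0 + 1)
          omega
        · rw [runIndices_blocks_update a b (by omega) (by have := hb 0; omega), hrun, hja]

lemma blocksFit_blocks_of_memSk {n k : ℕ} {s : GString} (hs : memSk n k s) :
    BlocksFit n 0 (blocks s.l s.a s.b) := by
  have := blocksFit_blocks s.l s.a s.b fun t => one_le_two.trans (hs.1 t)
  rwa [lenOf_eq, hs.2.2] at this

lemma phi_eq_blockExpansion {n k : ℕ} {s : GString} (hs : memSk n k s) :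
    phi n s = blockExpansion n ∅ (blocks s.l s.a s.b) := by
  obtain ⟨hb, -, hsum⟩ := hs
  obtain rfl : lenOf s.l s.a s.b = n := (lenOf_eq _ _ _).trans hsum
  rw [phi, dif_pos rfl]
  exact rawphi_eq_blockExpansion _ _ _ fun i => one_le_two.trans (hb i)

lemma phi_eq_Psi {n k : ℕ} {s : GString} (hs : memSk n k s) {i : Fin k → ℕ} (hi : StrictMono i)
    (him : Finset.image i Finset.univ = (runIndices (blocks s.l s.a s.b)).toFinset) :
    phi n s = Psi n k fun t => e n (i t) := by
  have hfit := blocksFit_blocks_of_memSk hs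
  have hJ : List.ofFn i = runIndices (blocks s.l s.a s.b) :=
    (List.sortedLT_ofFn_iff.mpr hi).eq_of_mem_iff
      (List.sortedLT_iff_pairwise.mpr hfit.pairwise_runIndices) fun x => by
        rw [← List.mem_toFinset, ← Fin.univ_image_def, him, List.mem_toFinset]
  rw [phi_eq_blockExpansion hs, ← foldl_mul2_runIndices (by simp) hfit, Psi_eq_foldl, ← hJ,
    List.map_ofFn, vSet_empty]
  rfl

lemma exists_strictMono_of_memSk {n k : ℕ} {s : GString} (hs : memSk n k s) :
    ∃ i : Fin k → ℕ, StrictMono i ∧ (∀ t, 1 ≤ i t ∧ i t ≤ n - 1) ∧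
      Finset.image i Finset.univ = (runIndices (blocks s.l s.a s.b)).toFinset := by
  have hfit := blocksFit_blocks_of_memSk hs
  have hcard : (runIndices (blocks s.l s.a s.b)).toFinset.card = k := by
    rw [List.toFinset_card_of_nodup hfit.pairwise_runIndices.nodup, length_runIndices_blocks,
      hs.2.1]
  refine ⟨_, (Finset.orderEmbOfFin _ hcard).strictMono, fun t => ?_,
    Finset.image_orderEmbOfFin_univ _ _⟩
  have := hfit.bounds_of_mem_runIndices (List.mem_toFinset.mp (Finset.orderEmbOfFin_mem _ hcard t))
  omega

lemma exists_memSk_of_strictMono {n k : ℕ} {i : Fin k → ℕ} (hi : StrictMono i)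
    (hbd : ∀ t, 1 ≤ i t ∧ i t ≤ n - 1) : ∃ s : GString, memSk n k s ∧
      Finset.image i Finset.univ = (runIndices (blocks s.l s.a s.b)).toFinset := by
  obtain ⟨l, a, b, hb, hsum, hrun⟩ := exists_blocks_runIndices_eq n (List.ofFn i)
    (List.sortedLT_ofFn_iff.mpr hi).pairwise fun x hx => by
      obtain ⟨t, rfl⟩ := List.mem_ofFn.mp hx
      have := hbd t
      omega
  refine ⟨⟨l, a, b⟩, ⟨hb, ?_, hsum⟩, by rw [Fin.univ_image_def, hrun]⟩
  rw [← length_runIndices_blocks a b, hrun, List.length_ofFn]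

theorem stmt14_general (n k : ℕ) :
    (∀ s : GString, memSk n k s →
      ∀ i : Fin k → ℕ, StrictMono i →
        (Finset.image i Finset.univ = Finset.univ.biUnion (fun j : Fin s.l =>
          Finset.Ico
            ((s.a 0 + ∑ t ∈ Finset.univ.filter (fun t => t < j), (s.b t + s.a t.succ)) + 1)
            ((s.a 0 + ∑ t ∈ Finset.univ.filter (fun t => t < j), (s.b t + s.a t.succ)) + s.b j))) →
        phi n s = Psi n k (fun t => e n (i t))) ∧
    {x : T n | ∃ s : GString, memSk n k s ∧ x = phi n s}
      = {x : T n | ∃ i : Fin k → ℕ, StrictMono i ∧ (∀ t, 1 ≤ i t ∧ i t ≤ n - 1)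
          ∧ x = Psi n k (fun t => e n (i t))} := by
  refine ⟨fun s hs i hi him => phi_eq_Psi hs hi (him.trans (toFinset_runIndices_blocks _ _).symm),
    Set.ext fun x => ⟨?_, ?_⟩⟩
  · rintro ⟨s, hs, rfl⟩
    obtain ⟨i, hi, hbd, him⟩ := exists_strictMono_of_memSk hs
    exact ⟨i, hi, hbd, phi_eq_Psi hs hi him⟩
  · rintro ⟨i, hi, hbd, rfl⟩
    obtain ⟨s, hs, him⟩ := exists_memSk_of_strictMono hi hbd
    exact ⟨s, hs, (phi_eq_Psi hs hi him).symm⟩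

theorem stmt14 (n k : ℕ) (hn : 2 ≤ n) (hk1 : 1 ≤ k) (hk2 : k ≤ n - 1) :
    (∀ s : GString, memSk n k s →
      ∀ i : Fin k → ℕ, StrictMono i →
        (Finset.image i Finset.univ = Finset.univ.biUnion (fun j : Fin s.l =>
          Finset.Ico
            ((s.a 0 + ∑ t ∈ Finset.univ.filter (fun t => t < j), (s.b t + s.a t.succ)) + 1)
            ((s.a 0 + ∑ t ∈ Finset.univ.filter (fun t => t < j), (s.b t + s.a t.succ)) + s.b j))) →
        phi n s = Psi n k (fun t => e n (i t))) ∧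
    {x : T n | ∃ s : GString, memSk n k s ∧ x = phi n s}
      = {x : T n | ∃ i : Fin k → ℕ, StrictMono i ∧ (∀ t, 1 ≤ i t ∧ i t ≤ n - 1)
          ∧ x = Psi n k (fun t => e n (i t))} :=
  stmt14_general n k
end
end

section
/- Let b ≥ 2. For every t with 1 ≤ t ≤ b−1, one has Φ_t(Θ_b) = −q⁻¹ · Θ_b in T_b. (A crossing applied inside a block vector multiplies it by −q⁻¹.) -/
/-!
Write `Θ_b = Σ_r c_r v_{β(r)}` and let the crossing act on the (0-indexed) positions `i = t - 1`,
`j = t`. Every string `β(r)` with `r ∉ {i, j}` carries `1` in both positions, where the `R`-matrix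
is `-q⁻¹`. The two remaining strings `β(i)`, `β(j)` are exchanged by the crossing, which acts on
their span by the matrix `[[q - q⁻¹, 1], [1, 0]]`; its `-q⁻¹`-eigenvectors are the multiples of
`v_{β(i)} - q v_{β(j)}`, and indeed `c_j = -q c_i`.
-/

open scoped BigOperators

set_option maxHeartbeats 1000000
set_option synthInstance.maxHeartbeats 400000

noncomputable section

theorem Function.update_update_eq_iff {ι X : Type*} [DecidableEq ι] {i j : ι} (hij : i ≠ j)
    (β α : ι → X) (a c : X) :
    Function.update (Function.update β i a) j c = α ↔
      a = α i ∧ c = α j ∧ ∀ k, k ≠ i → k ≠ j → β k = α k := by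
  simp only [Function.update_eq_iff, Function.update_apply]
  constructor
  · rintro ⟨hc, h⟩
    refine ⟨by simpa using h i hij, hc, fun k hki hkj => by simpa [hki] using h k hkj⟩
  · rintro ⟨ha, hc, h⟩
    refine ⟨hc, fun k hkj => ?_⟩
    split_ifs with hki
    · exact hki ▸ ha
    · exact h k hki hkj

theorem Function.update_update_of_eq {ι X : Type*} [DecidableEq ι] {f : ι → X} {i j : ι}
    {a c : X} (ha : f i = a) (hc : f j = c) : Function.update (Function.update f i a) j c = f := by
  subst ha hc
  simp

theorem LinearMap.map_sum_eq_smul_of_pair {R M ι : Type*} [Semiring R] [AddCommMonoid M]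
    [Module R M] [Fintype ι] (f : M →ₗ[R] M) (x : ι → M) (c : R) {i j : ι} (hij : i ≠ j)
    (hpair : f (x i + x j) = c • (x i + x j))
    (hother : ∀ r, r ≠ i → r ≠ j → f (x r) = c • x r) :
    f (∑ r, x r) = c • ∑ r, x r := by
  classical
  rw [← Finset.sum_compl_add_sum {i, j}, Finset.sum_pair hij, map_add, hpair, map_sum,
    smul_add c (∑ r ∈ {i, j}ᶜ, x r), Finset.smul_sum]
  congr 1
  refine Finset.sum_congr rfl fun r hr => ?_
  simp only [Finset.mem_compl, Finset.mem_insert, Finset.mem_singleton, not_or] at hr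
  exact hother r hr.1 hr.2

theorem PhiAux_v_eq_sum_Rmat {n : ℕ} {i j : Fin n} (hij : i ≠ j) (α : Fin n → Fin 2) :
    PhiAux n i j (v n α) = ∑ out : Fin 2 × Fin 2,
      Rmat out (α i, α j) • v n (Function.update (Function.update α i out.1) j out.2) := by
  funext β
  set agree : Prop := ∀ k, k ≠ i → k ≠ j → β k = α k
  have lhs : PhiAux n i j (v n α) β = Rmat (β i, β j) (α i, α j) * if agree then 1 else 0 := by
    simp only [PhiAux, LinearMap.coe_mk, AddHom.coe_mk, v, Function.update_update_eq_iff hij,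
      mul_ite, mul_one, mul_zero, Fintype.sum_prod_type, ite_and, Finset.sum_ite_irrel,
      Finset.sum_const_zero, Finset.sum_ite_eq', Finset.mem_univ, if_true, agree]
  have rhs : (∑ out : Fin 2 × Fin 2, Rmat out (α i, α j) •
      v n (Function.update (Function.update α i out.1) j out.2)) β =
      Rmat (β i, β j) (α i, α j) * if agree then 1 else 0 := by
    simp only [Finset.sum_apply, Pi.smul_apply, smul_eq_mul, v, eq_comm (a := β),
      Function.update_update_eq_iff hij, mul_ite, mul_one, mul_zero, Fintype.sum_prod_type,
      ite_and, Finset.sum_ite_irrel, Finset.sum_const_zero, Finset.sum_ite_eq', Finset.mem_univ,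
      if_true, agree, eq_comm (a := α _)]
  rw [lhs, rhs]

section R_matrix

variable {M : Type*} [AddCommMonoid M] [Module K M]

theorem sum_Rmat_one_one_smul (g : Fin 2 × Fin 2 → M) :
    ∑ out, Rmat out (1, 1) • g out = -q⁻¹ • g (1, 1) := by
  simp [Rmat]

theorem sum_Rmat_zero_one_smul (g : Fin 2 × Fin 2 → M) :
    ∑ out, Rmat out (0, 1) • g out = (q - q⁻¹) • g (0, 1) + g (1, 0) := by
  simp [Fintype.sum_prod_type, Rmat, add_comm]

theorem sum_Rmat_one_zero_smul (g : Fin 2 × Fin 2 → M) :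
    ∑ out, Rmat out (1, 0) • g out = g (0, 1) := by
  simp [Rmat]

variable {n : ℕ} {i j : Fin n} {α : Fin n → Fin 2}

theorem PhiAux_v_of_one_one (hij : i ≠ j) (hi : α i = 1) (hj : α j = 1) :
    PhiAux n i j (v n α) = -q⁻¹ • v n α := by
  rw [PhiAux_v_eq_sum_Rmat hij, hi, hj, sum_Rmat_one_one_smul, Function.update_update_of_eq hi hj]

theorem PhiAux_v_of_zero_one (hij : i ≠ j) (hi : α i = 0) (hj : α j = 1) :
    PhiAux n i j (v n α) = (q - q⁻¹) • v n α + v n (α ∘ Equiv.swap i j) := by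
  rw [PhiAux_v_eq_sum_Rmat hij, hi, hj, sum_Rmat_zero_one_smul, Equiv.comp_swap_eq_update, hi, hj,
    Function.update_comm hij.symm, Function.update_update_of_eq hi hj]

theorem PhiAux_v_of_one_zero (hij : i ≠ j) (hi : α i = 1) (hj : α j = 0) :
    PhiAux n i j (v n α) = v n (α ∘ Equiv.swap i j) := by
  rw [PhiAux_v_eq_sum_Rmat hij, hi, hj, sum_Rmat_one_zero_smul, Equiv.comp_swap_eq_update, hi, hj,
    Function.update_comm hij.symm]

end R_matrix

theorem q_ne_zero : q ≠ 0 := RatFunc.X_ne_zero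

def thetaString (b : ℕ) (r : Fin b) : Fin b → Fin 2 := fun k => if k = r then 0 else 1

def thetaCoeff (b : ℕ) (r : Fin b) : K := (-1 : K) ^ (r : ℕ) * q⁻¹ ^ (b - 1 - (r : ℕ))

theorem Theta_eq_sum (b : ℕ) : Theta b = ∑ r, thetaCoeff b r • v b (thetaString b r) := rfl

theorem thetaString_comp_swap {b : ℕ} (r i j : Fin b) :
    thetaString b r ∘ Equiv.swap i j = thetaString b (Equiv.swap i j r) := by
  funext k
  simp [thetaString, Equiv.swap_apply_eq_iff]

theorem thetaCoeff_of_val_eq_succ {b : ℕ} {i j : Fin b} (h : (j : ℕ) = i + 1) :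
    thetaCoeff b j = -q * thetaCoeff b i := by
  have hexp : b - 1 - (i : ℕ) = b - 1 - (j : ℕ) + 1 := by omega
  rw [thetaCoeff, thetaCoeff, hexp, h, pow_succ (-1 : K), pow_succ q⁻¹]
  field_simp [q_ne_zero]

theorem PhiAux_thetaString_of_ne {b : ℕ} {i j r : Fin b} (hij : i ≠ j) (hri : r ≠ i)
    (hrj : r ≠ j) : PhiAux b i j (v b (thetaString b r)) = -q⁻¹ • v b (thetaString b r) :=
  PhiAux_v_of_one_one hij (if_neg hri.symm) (if_neg hrj.symm)

theorem PhiAux_thetaString_pair {b : ℕ} {i j : Fin b} (h : (j : ℕ) = i + 1) :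
    PhiAux b i j (thetaCoeff b i • v b (thetaString b i) + thetaCoeff b j • v b (thetaString b j))
      = -q⁻¹ • (thetaCoeff b i • v b (thetaString b i) +
          thetaCoeff b j • v b (thetaString b j)) := by
  have hij : i ≠ j := Fin.ne_of_val_ne (by omega)
  rw [map_add, map_smul, map_smul,
    PhiAux_v_of_zero_one hij (if_pos rfl) (if_neg hij.symm),
    PhiAux_v_of_one_zero hij (if_neg hij) (if_pos rfl),
    thetaString_comp_swap, thetaString_comp_swap, Equiv.swap_apply_left, Equiv.swap_apply_right,
    thetaCoeff_of_val_eq_succ h]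
  funext γ
  simp only [Pi.add_apply, Pi.smul_apply, smul_eq_mul]
  field_simp [q_ne_zero]
  ring

theorem PhiAux_Theta {b : ℕ} {i j : Fin b} (h : (j : ℕ) = i + 1) :
    PhiAux b i j (Theta b) = -q⁻¹ • Theta b := by
  rw [Theta_eq_sum]
  refine LinearMap.map_sum_eq_smul_of_pair _ _ _ (Fin.ne_of_val_ne (by omega))
    (PhiAux_thetaString_pair h) fun r hri hrj => ?_
  rw [map_smul, PhiAux_thetaString_of_ne (Fin.ne_of_val_ne (by omega)) hri hrj, smul_comm]

theorem stmt15_general (b t : ℕ) (ht1 : 1 ≤ t) (ht2 : t ≤ b - 1) :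
    Phi b t (Theta b) = -q⁻¹ • Theta b := by
  rw [Phi, dif_pos (by omega)]
  exact PhiAux_Theta (Nat.sub_add_cancel ht1).symm

theorem stmt15 (b t : ℕ) (hb : 2 ≤ b) (ht1 : 1 ≤ t) (ht2 : t ≤ b - 1) :
    Phi b t (Theta b) = -q⁻¹ • Theta b :=
  stmt15_general b t ht1 ht2

end
end

section
/- Let b ≥ 2. In T_{b+1}, under the identification of T_1 ⊗ T_b and T_2 ⊗ T_{b−1} with T_{b+1} by concatenation, one has Φ_1(v₀ ⊗ Θ_b) = q · (v₀ ⊗ Θ_b) + Θ_2 ⊗ Θ_{b−1}. (A crossing applied at the left edge of a block.) -/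
open scoped BigOperators

set_option maxHeartbeats 1000000
set_option synthInstance.maxHeartbeats 400000

noncomputable section

/-!
Evaluate both sides at a string `x y ρ`. The vector `Θ` obeys the recursion
`Θ_{c+1}(0ρ) = q^{-c} [ρ = 1⋯1]`, `Θ_{c+1}(1ρ) = -Θ_c(ρ)`, and `Φ_1` only mixes the first two
letters, so everything reduces to the four values of `(x, y)`. The only nontrivial one is
`(0, 1)`, where the entry `q - q⁻¹` of the `R`-matrix splits into the `q` of the first term and
the coefficient `q⁻¹` of `v₀ ⊗ v₁` in `Θ_2`.
-/

lemma fun_ite_zero_eq_cons (c : ℕ) :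
    (fun i : Fin (c + 1) => if i = 0 then (0 : Fin 2) else 1) = Fin.cons 0 fun _ => 1 := by
  funext i
  cases i using Fin.cases <;> simp [Fin.succ_ne_zero]

lemma fun_ite_succ_eq_cons {c : ℕ} (s : Fin c) :
    (fun i : Fin (c + 1) => if i = s.succ then (0 : Fin 2) else 1) =
      Fin.cons 1 fun i => if i = s then 0 else 1 := by
  funext i
  cases i using Fin.cases <;> simp [(Fin.succ_ne_zero s).symm]

lemma Theta_zero : Theta 0 = 0 := by
  simp [Theta]

lemma Theta_apply_cons_zero (c : ℕ) (ρ : Fin c → Fin 2) :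
    Theta (c + 1) (Fin.cons 0 ρ) = if ρ = fun _ => 1 then q⁻¹ ^ c else 0 := by
  simp [Theta, Fin.sum_univ_succ, v, fun_ite_zero_eq_cons, fun_ite_succ_eq_cons, Fin.cons_inj]

lemma Theta_apply_cons_one (c : ℕ) (ρ : Fin c → Fin 2) :
    Theta (c + 1) (Fin.cons 1 ρ) = -Theta c ρ := by
  simp only [Theta, Finset.sum_apply, Pi.smul_apply, v, smul_eq_mul, Fin.sum_univ_succ,
    fun_ite_zero_eq_cons, fun_ite_succ_eq_cons, Fin.cons_inj, one_ne_zero, false_and, true_and,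
    if_false, mul_zero, zero_add, ← Finset.sum_neg_distrib]
  refine Finset.sum_congr rfl fun s _ => ?_
  rw [Fin.val_succ, pow_succ, show c + 1 - 1 - (s + 1) = c - 1 - s by omega]
  ring

lemma Theta_two_apply (x y : Fin 2) :
    Theta 2 ![x, y] = if x = 0 ∧ y = 1 then q⁻¹ else if x = 1 ∧ y = 0 then -1 else 0 := by
  change Theta (1 + 1) (Fin.cons x (Fin.cons y Fin.elim0)) = _
  fin_cases x <;> fin_cases y <;>
    simp [Theta_apply_cons_zero, Theta_apply_cons_one, Theta_zero, funext_iff]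

lemma exists_eq_append_cons {m : ℕ} (γ : Fin (1 + (m + 1)) → Fin 2) :
    ∃ x y ρ, γ = Fin.append ![x] (Fin.cons y ρ) := by
  refine ⟨γ (Fin.castAdd _ 0), γ (Fin.natAdd 1 0), fun i => γ (Fin.natAdd 1 i.succ), ?_⟩
  conv_lhs => rw [← Fin.append_castAdd_natAdd (f := γ)]
  congr 1
  · funext i
    rw [Subsingleton.elim i 0]
    rfl
  · funext j
    cases j using Fin.cases <;> rfl

lemma update_update_append_cons {m : ℕ} (x y x' y' : Fin 2) (ρ : Fin m → Fin 2) :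
    Function.update (Function.update (Fin.append ![x] (Fin.cons y ρ)) (Fin.castAdd (m + 1) 0) x')
        (Fin.natAdd 1 0) y' = Fin.append ![x'] (Fin.cons y' ρ) := by
  funext i
  refine Fin.addCases (fun i => ?_) (fun j => ?_) i
  · rw [Subsingleton.elim i 0]
    simp [Fin.ext_iff]
  · cases j using Fin.cases <;> simp [Fin.ext_iff]

lemma append_cons_comp_cast {m : ℕ} (x y : Fin 2) (ρ : Fin m → Fin 2) :
    Fin.append ![x] (Fin.cons y ρ) ∘ Fin.cast (by omega : 2 + m = 1 + (m + 1)) =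
      Fin.append ![x, y] ρ := by
  rw [Fin.append_right_cons]
  funext i
  simp

lemma conc_append {a b : ℕ} (f : T a) (g : T b) (α : Fin a → Fin 2) (β : Fin b → Fin 2) :
    conc f g (Fin.append α β) = f α * g β := by
  simp [conc]

lemma castT_apply {a b : ℕ} (h : a = b) (f : T a) (γ : Fin b → Fin 2) :
    castT h f γ = f (γ ∘ Fin.cast h) := rfl

lemma v0_one_apply (x : Fin 2) : v0 1 ![x] = if x = 0 then 1 else 0 := by
  simp [v0, v, funext_iff]

lemma Phi_one_apply_append_cons {m : ℕ} (f : T (1 + (m + 1))) (x y : Fin 2)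
    (ρ : Fin m → Fin 2) :
    Phi (1 + (m + 1)) 1 f (Fin.append ![x] (Fin.cons y ρ)) =
      ∑ p : Fin 2 × Fin 2, Rmat (x, y) p * f (Fin.append ![p.1] (Fin.cons p.2 ρ)) := by
  have h0 : (⟨1 - 1, by omega⟩ : Fin (1 + (m + 1))) = Fin.castAdd (m + 1) 0 := rfl
  have h1 : (⟨1, by omega⟩ : Fin (1 + (m + 1))) = Fin.natAdd 1 0 := rfl
  rw [Phi, dif_pos (by omega)]
  simp only [PhiAux, LinearMap.coe_mk, AddHom.coe_mk, h0, h1, update_update_append_cons]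
  simp

theorem stmt16 (b : ℕ) (hb : 2 ≤ b) :
    Phi (1 + b) 1 (conc (v0 1) (Theta b))
      = q • conc (v0 1) (Theta b)
        + castT (by omega : 2 + (b - 1) = 1 + b) (conc (Theta 2) (Theta (b - 1))) := by
  obtain ⟨m, rfl⟩ : ∃ m, b = m + 1 := ⟨b - 1, by omega⟩
  funext γ
  obtain ⟨x, y, ρ, rfl⟩ := exists_eq_append_cons γ
  rw [Pi.add_apply, Pi.smul_apply, castT_apply, append_cons_comp_cast, Phi_one_apply_append_cons]
  simp only [conc_append, Fintype.sum_prod_type, Fin.sum_univ_two, v0_one_apply, Theta_two_apply]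
  fin_cases x <;> fin_cases y <;> simp [Rmat, Theta_apply_cons_zero, Theta_apply_cons_one]
  ring

end
end

section
/- Let n ≥ 2. For every t with 1 ≤ t ≤ n−1, the map Φ_t commutes with both E_n and F_n: Φ_t ∘ E_n = E_n ∘ Φ_t and Φ_t ∘ F_n = F_n ∘ Φ_t as K-linear endomorphisms of T_n. (Equivariance of the braid group action with respect to the U_q(gl(1|1))-action; in particular each Φ_t preserves every highest weight space H_k.) -/
open scoped BigOperators

set_option maxHeartbeats 1000000
set_option synthInstance.maxHeartbeats 400000

noncomputable section

/-!
`E_n` and `F_n` are sums of local terms, one per site `k`, each carrying the sign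
`(-1)^{#ones left of k}`. For `k` away from the strands `t, t+1` the `R`-matrix does not
touch site `k` and, since it preserves the number of ones, does not change the sign
either. The two terms at `t, t+1` combine, because their coefficients differ by the factor `q`,
into the coproduct `Δ(E)` resp. `Δ(F)` acting on `V ⊗ V`, and `R` commutes with it: a
finite check on `K² ⊗ K²`.
-/

open Finset Function

namespace Braid

-- The `R`-matrix on `V ⊗ V`, `V = K²`, whose vectors are functions on `Fin 2 × Fin 2`.
def rAct (g : Fin 2 × Fin 2 → K) : Fin 2 × Fin 2 → K := fun o => ∑ p, Rmat o p * g p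

/-- `Δ(X) = X ⊗ 1 + (sign) q ⊗ X` on `V ⊗ V`, where `X` moves the entry `a` to `b`
(`X = E` for `a = 0`, `X = F` for `a = 1`). -/
def coprodFlip (a b : Fin 2) (g : Fin 2 × Fin 2 → K) : Fin 2 × Fin 2 → K := fun o =>
  (if o.1 = a then g (b, o.2) else 0) + (if o.2 = a then (-1) ^ (o.1 : ℕ) * q * g (o.1, b) else 0)

theorem rAct_coprodFlip {a b : Fin 2} (hab : a ≠ b) (g : Fin 2 × Fin 2 → K) :
    rAct (coprodFlip a b g) = coprodFlip a b (rAct g) := by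
  have hq : q ≠ 0 := RatFunc.X_ne_zero
  funext ⟨x, y⟩
  obtain ⟨rfl, rfl⟩ | ⟨rfl, rfl⟩ : a = 0 ∧ b = 1 ∨ a = 1 ∧ b = 0 := by omega
  all_goals fin_cases x <;> fin_cases y <;>
    simp [rAct, coprodFlip, Rmat, Fintype.sum_prod_type] <;> field_simp <;> ring

theorem weight_eq_of_Rmat_ne_zero {o p : Fin 2 × Fin 2} (h : Rmat o p ≠ 0) :
    (o.1 : ℕ) + o.2 = p.1 + p.2 := by
  obtain ⟨x, y⟩ := o; obtain ⟨x', y'⟩ := p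
  fin_cases x <;> fin_cases y <;> fin_cases x' <;> fin_cases y' <;> simp_all [Rmat]

variable {n : ℕ}

def onesBelow (β : Fin n → Fin 2) (k : Fin n) : ℕ := #{m | m < k ∧ β m = 1}

theorem onesBelow_eq_sum (β : Fin n → Fin 2) (k : Fin n) :
    onesBelow β k = ∑ m ∈ Iio k, (β m : ℕ) := by
  have hval : ∀ x : Fin 2, (x : ℕ) = if x = 1 then 1 else 0 := by decide
  rw [onesBelow, card_filter, ← sum_filter]
  simp only [hval, ← sum_filter]
  congr 1
  ext m
  simp

theorem onesBelow_congr {β γ : Fin n → Fin 2} {k : Fin n} (h : ∀ m < k, β m = γ m) :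
    onesBelow β k = onesBelow γ k := by
  rw [onesBelow_eq_sum, onesBelow_eq_sum]
  exact sum_congr rfl fun m hm => by rw [h m (mem_Iio.1 hm)]

theorem onesBelow_of_val_add_one {i j : Fin n} (hij : (i : ℕ) + 1 = j) (β : Fin n → Fin 2) :
    onesBelow β j = onesBelow β i + β i := by
  have : Iio j = insert i (Iio i) := by
    ext m; simp only [mem_Iio, mem_insert, Fin.lt_def, ← Fin.val_inj]; omega
  rw [onesBelow_eq_sum, onesBelow_eq_sum, this, sum_insert (by simp), add_comm]

theorem onesBelow_eq_of_eqOn_compl_pair {i j k : Fin n} (hij : i ≠ j) (hik : i < k) (hjk : j < k)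
    {β γ : Fin n → Fin 2} (h : ∀ m, m ≠ i → m ≠ j → β m = γ m)
    (hw : (β i : ℕ) + β j = γ i + γ j) : onesBelow β k = onesBelow γ k := by
  have hsub : {i, j} ⊆ Iio k := by simp [insert_subset_iff, hik, hjk]
  rw [onesBelow_eq_sum, onesBelow_eq_sum, ← sum_sdiff hsub,
    ← sum_sdiff hsub (f := fun m => (γ m : ℕ)), sum_pair hij, sum_pair hij, hw]
  congr 1
  refine sum_congr rfl fun m hm => ?_
  simp only [mem_sdiff, mem_insert, mem_singleton, not_or] at hm
  rw [h m hm.2.1 hm.2.2]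

def pairSlice (i j : Fin n) (f : T n) (β : Fin n → Fin 2) : Fin 2 × Fin 2 → K :=
  fun p => f (update (update β i p.1) j p.2)

theorem PhiAux_apply (i j : Fin n) (f : T n) (β : Fin n → Fin 2) :
    PhiAux n i j f β = rAct (pairSlice i j f β) (β i, β j) := rfl

theorem pairSlice_update_left (i j : Fin n) (f : T n) (β : Fin n → Fin 2) (x : Fin 2) :
    pairSlice i j f (update β i x) = pairSlice i j f β := by
  funext p
  simp only [pairSlice, update_idem]

theorem pairSlice_update_right {i j : Fin n} (hij : i ≠ j) (f : T n) (β : Fin n → Fin 2)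
    (y : Fin 2) : pairSlice i j f (update β j y) = pairSlice i j f β := by
  funext p
  simp only [pairSlice, update_comm hij.symm, update_idem]

theorem pairSlice_PhiAux {i j : Fin n} (hij : i ≠ j) (f : T n) (β : Fin n → Fin 2) :
    pairSlice i j (PhiAux n i j f) β = rAct (pairSlice i j f β) := by
  funext p
  rw [pairSlice, PhiAux_apply, pairSlice_update_right hij, pairSlice_update_left]
  simp only [update_self, update_of_ne hij]

-- With `c k = q^{-(n-1-k)}` resp. `c k = q^k` this is `E_n` resp. `F_n`; all the argument
-- needs of `c` is `c (k + 1) = q * c k`, which makes two adjacent sites act through `coprodFlip`.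
def flipTerm (a b : Fin 2) (c : Fin n → K) (f : T n) (β : Fin n → Fin 2) (k : Fin n) : K :=
  if β k = a then (-1) ^ onesBelow β k * c k * f (update β k b) else 0

def flipSum (a b : Fin 2) (c : Fin n → K) (f : T n) : T n := fun β => ∑ k, flipTerm a b c f β k

variable {i j : Fin n} {a b : Fin 2} {c : Fin n → K}

theorem flipTerm_add_flipTerm (hij : (i : ℕ) + 1 = j) (hc : c j = q * c i) (f : T n)
    (β : Fin n → Fin 2) : flipTerm a b c f β i + flipTerm a b c f β j =
      (-1) ^ onesBelow β i * c i * coprodFlip a b (pairSlice i j f β) (β i, β j) := by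
  have hne : i ≠ j := by rw [Ne, ← Fin.val_inj]; omega
  have hi : pairSlice i j f β (b, β j) = f (update β i b) := by
    rw [pairSlice, ← update_of_ne hne.symm b β, update_eq_self]
  have hj : pairSlice i j f β (β i, b) = f (update β j b) := by simp [pairSlice]
  simp only [flipTerm, coprodFlip, hi, hj, onesBelow_of_val_add_one hij, hc, pow_add]
  split_ifs <;> ring

theorem sum_Rmat_mul_flipTerm_add_flipTerm (hij : (i : ℕ) + 1 = j) (hc : c j = q * c i)
    (f : T n) (β : Fin n → Fin 2) :
    ∑ p, Rmat (β i, β j) p * (flipTerm a b c f (update (update β i p.1) j p.2) i +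
      flipTerm a b c f (update (update β i p.1) j p.2) j) =
      (-1) ^ onesBelow β i * c i * rAct (coprodFlip a b (pairSlice i j f β)) (β i, β j) := by
  have hne : i ≠ j := by rw [Ne, ← Fin.val_inj]; omega
  rw [rAct, mul_sum]
  refine sum_congr rfl fun p _ => ?_
  have hbelow : onesBelow (update (update β i p.1) j p.2) i = onesBelow β i :=
    onesBelow_congr fun m hm => by
      rw [update_of_ne (by rw [Ne, ← Fin.val_inj]; rw [Fin.lt_def] at hm; omega),
        update_of_ne hm.ne]
  rw [flipTerm_add_flipTerm hij hc, hbelow, pairSlice_update_right hne, pairSlice_update_left]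
  simp only [update_self, update_of_ne hne]
  ring

theorem sum_Rmat_mul_flipTerm_of_ne {k : Fin n} (hij : (i : ℕ) + 1 = j) (hki : k ≠ i)
    (hkj : k ≠ j) (f : T n) (β : Fin n → Fin 2) :
    ∑ p, Rmat (β i, β j) p * flipTerm a b c f (update (update β i p.1) j p.2) k =
      flipTerm a b c (PhiAux n i j f) β k := by
  have hne : i ≠ j := by rw [Ne, ← Fin.val_inj]; omega
  simp only [flipTerm, update_of_ne hkj, update_of_ne hki]
  split_ifs with ha
  · rw [PhiAux_apply, rAct, mul_sum, update_of_ne hki.symm, update_of_ne hkj.symm]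
    refine sum_congr rfl fun p _ => ?_
    by_cases hR : Rmat (β i, β j) p = 0
    · simp [hR]
    have hbelow : onesBelow (update (update β i p.1) j p.2) k = onesBelow β k := by
      rcases lt_or_gt_of_ne hki with hlt | hgt
      · refine onesBelow_congr fun m hm => ?_
        rw [update_of_ne (by rw [Ne, ← Fin.val_inj]; rw [Fin.lt_def] at hm hlt; omega),
          update_of_ne (hm.trans hlt).ne]
      · have hjk : j < k := by
          rw [Fin.lt_def] at hgt ⊢; rw [Ne, ← Fin.val_inj] at hkj; omega
        refine onesBelow_eq_of_eqOn_compl_pair hne hgt hjk (fun m hmi hmj => ?_) ?_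
        · rw [update_of_ne hmj, update_of_ne hmi]
        · simp only [update_self, update_of_ne hne]
          exact (weight_eq_of_Rmat_ne_zero hR).symm
    rw [hbelow, pairSlice, update_comm hkj.symm, update_comm hki.symm]
    ring
  · simp

theorem PhiAux_flipSum (hij : (i : ℕ) + 1 = j) (hab : a ≠ b) (hc : c j = q * c i) (f : T n) :
    PhiAux n i j (flipSum a b c f) = flipSum a b c (PhiAux n i j f) := by
  have hne : i ≠ j := by rw [Ne, ← Fin.val_inj]; omega
  funext β
  calc PhiAux n i j (flipSum a b c f) β
      = ∑ k, ∑ p, Rmat (β i, β j) p * flipTerm a b c f (update (update β i p.1) j p.2) k := by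
        simp only [PhiAux_apply, rAct, pairSlice, flipSum, mul_sum]
        exact sum_comm
    _ = ∑ k, flipTerm a b c (PhiAux n i j f) β k := by
        rw [← sum_compl_add_sum {i, j}, ← sum_compl_add_sum {i, j}, sum_pair hne, sum_pair hne,
          ← sum_add_distrib]
        congr 1
        · refine sum_congr rfl fun k hk => ?_
          simp only [mem_compl, mem_insert, mem_singleton, not_or] at hk
          exact sum_Rmat_mul_flipTerm_of_ne hij hk.1 hk.2 f β
        · simp only [← mul_add]
          rw [sum_Rmat_mul_flipTerm_add_flipTerm hij hc, flipTerm_add_flipTerm hij hc,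
            pairSlice_PhiAux hne, rAct_coprodFlip hab]

theorem En_eq_flipSum (f : T n) : En n f = flipSum 0 1 (fun k => q⁻¹ ^ (n - 1 - (k : ℕ))) f := rfl

theorem Fn_eq_flipSum (f : T n) : Fn n f = flipSum 1 0 (fun k => q ^ (k : ℕ)) f := rfl

theorem PhiAux_commute_En_and_Fn (hij : (i : ℕ) + 1 = j) :
    PhiAux n i j ∘ₗ En n = En n ∘ₗ PhiAux n i j ∧
      PhiAux n i j ∘ₗ Fn n = Fn n ∘ₗ PhiAux n i j := by
  have hq : q ≠ 0 := RatFunc.X_ne_zero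
  have hE : q⁻¹ ^ (n - 1 - (j : ℕ)) = q * q⁻¹ ^ (n - 1 - (i : ℕ)) := by
    rw [show n - 1 - (i : ℕ) = n - 1 - j + 1 by omega, pow_succ, mul_left_comm, mul_inv_cancel₀ hq,
      mul_one]
  have hF : q ^ (j : ℕ) = q * q ^ (i : ℕ) := by rw [← hij, pow_succ, mul_comm]
  refine ⟨LinearMap.ext fun f => ?_, LinearMap.ext fun f => ?_⟩
  · simp only [LinearMap.comp_apply, En_eq_flipSum]
    exact PhiAux_flipSum hij (by decide) hE f
  · simp only [LinearMap.comp_apply, Fn_eq_flipSum]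
    exact PhiAux_flipSum hij (by decide) hF f

end Braid

theorem stmt18_general (n t : ℕ) (ht1 : 1 ≤ t) (ht2 : t ≤ n - 1) :
    Phi n t ∘ₗ En n = En n ∘ₗ Phi n t ∧ Phi n t ∘ₗ Fn n = Fn n ∘ₗ Phi n t := by
  have ht : 0 < t ∧ t < n := ⟨ht1, by omega⟩
  rw [Phi, dif_pos ht]
  exact Braid.PhiAux_commute_En_and_Fn (Nat.sub_add_cancel ht1)

theorem stmt18 (n t : ℕ) (hn : 2 ≤ n) (ht1 : 1 ≤ t) (ht2 : t ≤ n - 1) :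
    Phi n t ∘ₗ En n = En n ∘ₗ Phi n t ∧ Phi n t ∘ₗ Fn n = Fn n ∘ₗ Phi n t :=
  stmt18_general n t ht1 ht2

end
end

section
/- Let n ≥ 2 and 0 ≤ k ≤ n−1. The K-vector space H_k is finite-dimensional of dimension equal to the binomial coefficient (n−1 choose k). -/
open scoped BigOperators

set_option maxHeartbeats 1000000
set_option synthInstance.maxHeartbeats 400000

noncomputable section

/-!
On `T n`, `E` and `F` are `∑ q^{-(n-1-i)} aᵢ` and `∑ q^i aᵢ†` for the Jordan–Wigner fermionic
operators `aᵢ, aᵢ†`, so the canonical anticommutation relations give `E² = 0` and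
`EF + FE = [n]·id` with `[n] ≠ 0`. Hence `E` is exact on the weight grading:
`H_k = ker E ∩ T_k = E(T_{k+1})`, and rank–nullity on `T_{k+1}` yields
`dim H_k + dim H_{k+1} = C(n, k+1)`. As these dimensions vanish for `k ≥ n`, descending
induction with Pascal's rule gives `dim H_k = C(n-1, k)`.
-/

open Finset Function Module

lemma card_filter_update_one {ι : Type*} [DecidableEq ι] (s : Finset ι) (β : ι → Fin 2)
    (i : ι) : #{j ∈ s | update β i 1 j = 1} =
      #{j ∈ s | update β i 0 j = 1} + if i ∈ s then 1 else 0 := by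
  split_ifs with hi
  · rw [← card_insert_of_notMem (s := {j ∈ s | update β i 0 j = 1}) (a := i) (by simp)]
    congr 1
    ext j
    rcases eq_or_ne j i with rfl | hj <;> simp [*]
  · congr 1
    ext j
    rcases eq_or_ne j i with rfl | hj <;> simp [*]

lemma wt_update_one {n : ℕ} (β : Fin n → Fin 2) (i : Fin n) :
    wt (update β i 1) = wt (update β i 0) + 1 := by
  simpa [wt] using card_filter_update_one univ β i

def jwSign {n : ℕ} (β : Fin n → Fin 2) (i : Fin n) : K :=
  (-1) ^ #{j | j < i ∧ β j = 1}

lemma jwSign_update_of_le {n : ℕ} (β : Fin n → Fin 2) {i j : Fin n} (h : j ≤ i) (x : Fin 2) :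
    jwSign (update β i x) j = jwSign β j := by
  unfold jwSign
  congr 2
  refine filter_congr fun l _ => ?_
  rcases eq_or_ne l i with rfl | hl
  · simp [not_lt.mpr h]
  · rw [update_of_ne hl]

lemma jwSign_update_one_of_lt {n : ℕ} (β : Fin n → Fin 2) {i j : Fin n} (h : i < j) :
    jwSign (update β i 1) j = - jwSign (update β i 0) j := by
  have := card_filter_update_one (univ.filter (· < j)) β i
  simp only [filter_filter, mem_filter, mem_univ, true_and, if_pos h] at this
  rw [jwSign, jwSign, this, pow_succ, mul_neg_one]

lemma jwSign_mul_self {n : ℕ} (β : Fin n → Fin 2) (i : Fin n) :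
    jwSign β i * jwSign β i = 1 := by
  rw [jwSign, ← mul_pow, neg_one_mul, neg_neg, one_pow]

lemma jwSign_update_sub_of_lt {n : ℕ} {β : Fin n → Fin 2} {i j : Fin n} {x : Fin 2}
    (hβ : β i = x) (h : i < j) : jwSign (update β i (1 - x)) j = - jwSign β j := by
  have key := jwSign_update_one_of_lt β h
  obtain rfl | rfl : x = 0 ∨ x = 1 := by omega
  · rwa [← hβ, update_eq_self] at key
  · rw [← hβ, update_eq_self] at key
    rw [key, neg_neg]
    rfl

/-- Jordan–Wigner fermionic operators: on basis vectors, `fermionOp n i x` sends `v α` with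
`α i = 1 - x` to `± v (α[i ↦ x])` and kills the other basis vectors. -/
def fermionOp (n : ℕ) (i : Fin n) (x : Fin 2) : Module.End K (T n) where
  toFun f β := if β i = x then jwSign β i * f (update β i (1 - x)) else 0
  map_add' f g := by
    funext β
    split_ifs <;> simp [*, mul_add]
  map_smul' c f := by
    funext β
    split_ifs <;> simp [*, mul_left_comm]

lemma fermionOp_apply {n : ℕ} (i : Fin n) (x : Fin 2) (f : T n) (β : Fin n → Fin 2) :
    fermionOp n i x f β = if β i = x then jwSign β i * f (update β i (1 - x)) else 0 := rfl

lemma fermionOp_mul_self {n : ℕ} (i : Fin n) (x : Fin 2) :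
    fermionOp n i x * fermionOp n i x = 0 := by
  refine LinearMap.ext fun f => funext fun β => ?_
  have hx : 1 - x ≠ x := by omega
  simp [fermionOp_apply, hx]

lemma fermionOp_anticomm_sub {n : ℕ} (i : Fin n) (x : Fin 2) :
    fermionOp n i x * fermionOp n i (1 - x) + fermionOp n i (1 - x) * fermionOp n i x = 1 := by
  refine LinearMap.ext fun f => funext fun β => ?_
  have h1 : 1 - (1 - x) = x := by omega
  simp only [LinearMap.add_apply, Module.End.mul_apply, Pi.add_apply, fermionOp_apply,
    update_self, update_idem, jwSign_update_of_le β le_rfl, h1, if_true, Module.End.one_apply]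
  rcases eq_or_ne (β i) x with hβ | hβ
  · have : β i ≠ 1 - x := by omega
    rw [if_pos hβ, if_neg this, ← hβ, update_eq_self, ← mul_assoc, jwSign_mul_self, one_mul,
      add_zero]
  · have : β i = 1 - x := by omega
    rw [if_neg hβ, if_pos this, ← this, update_eq_self, ← mul_assoc, jwSign_mul_self, one_mul,
      zero_add]

lemma fermionOp_anticomm_of_lt {n : ℕ} {i j : Fin n} (h : i < j) (x y : Fin 2) :
    fermionOp n i x * fermionOp n j y + fermionOp n j y * fermionOp n i x = 0 := by
  refine LinearMap.ext fun f => funext fun β => ?_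
  simp only [LinearMap.add_apply, Module.End.mul_apply, Pi.add_apply, fermionOp_apply,
    update_of_ne h.ne', update_of_ne h.ne, LinearMap.zero_apply, Pi.zero_apply]
  by_cases hβ : β i = x ∧ β j = y
  · rw [if_pos hβ.1, if_pos hβ.2, if_pos hβ.2, if_pos hβ.1, jwSign_update_sub_of_lt hβ.1 h,
      jwSign_update_of_le β h.le, update_comm h.ne]
    ring
  · rw [not_and_or] at hβ
    rcases hβ with hβ | hβ <;> simp [hβ]

lemma fermionOp_anticomm {n : ℕ} (i j : Fin n) (x y : Fin 2) :
    fermionOp n i x * fermionOp n j y + fermionOp n j y * fermionOp n i x =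
      if i = j ∧ x ≠ y then 1 else 0 := by
  rcases lt_trichotomy i j with h | rfl | h
  · rw [fermionOp_anticomm_of_lt h, if_neg (fun h' => h.ne h'.1)]
  · rcases eq_or_ne x y with rfl | hxy
    · rw [fermionOp_mul_self, add_zero, if_neg (fun h' => h'.2 rfl)]
    · obtain rfl : y = 1 - x := by omega
      rw [fermionOp_anticomm_sub, if_pos ⟨rfl, hxy⟩]
  · rw [add_comm, fermionOp_anticomm_of_lt h, if_neg (fun h' => h.ne' h'.1)]

lemma sum_smul_anticomm {ι R A : Type*} [Fintype ι] [CommSemiring R] [Semiring A] [Algebra R A]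
    (a b : ι → R) (u w : ι → A) :
    (∑ i, a i • u i) * (∑ j, b j • w j) + (∑ j, b j • w j) * (∑ i, a i • u i) =
      ∑ i, ∑ j, (a i * b j) • (u i * w j + w j * u i) := by
  simp only [sum_mul, mul_sum, smul_mul_smul_comm, smul_add, sum_add_distrib, mul_comm (b _)]
  rw [sum_comm (f := fun j i => (a i * b j) • (u i * w j))]

lemma En_eq_sum (n : ℕ) :
    En n = ∑ i : Fin n, q⁻¹ ^ (n - 1 - (i : ℕ)) • fermionOp n i 0 := by
  refine LinearMap.ext fun f => funext fun β => ?_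
  simp only [En, LinearMap.coe_mk, AddHom.coe_mk, LinearMap.coe_sum, Finset.sum_apply,
    LinearMap.smul_apply, Pi.smul_apply, fermionOp_apply, smul_eq_mul, mul_ite, mul_zero]
  refine Finset.sum_congr rfl fun i _ => ?_
  split_ifs
  · rw [jwSign, sub_zero, mul_assoc, mul_left_comm]
  · rfl

lemma Fn_eq_sum (n : ℕ) : Fn n = ∑ i : Fin n, q ^ (i : ℕ) • fermionOp n i 1 := by
  refine LinearMap.ext fun f => funext fun β => ?_
  simp only [Fn, LinearMap.coe_mk, AddHom.coe_mk, LinearMap.coe_sum, Finset.sum_apply,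
    LinearMap.smul_apply, Pi.smul_apply, fermionOp_apply, smul_eq_mul, mul_ite, mul_zero]
  refine Finset.sum_congr rfl fun i _ => ?_
  split_ifs
  · rw [jwSign, sub_self, mul_assoc, mul_left_comm]
  · rfl

lemma En_mul_self (n : ℕ) : En n * En n = 0 := by
  have h := sum_smul_anticomm (fun i : Fin n => q⁻¹ ^ (n - 1 - (i : ℕ)))
    (fun i : Fin n => q⁻¹ ^ (n - 1 - (i : ℕ))) (fermionOp n · 0) (fermionOp n · 0)
  simp only [fermionOp_anticomm, ne_eq, not_true_eq_false, and_false, if_false, smul_zero,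
    sum_const_zero, ← En_eq_sum] at h
  rwa [← two_smul K, smul_eq_zero, or_iff_right two_ne_zero] at h

def qInt (n : ℕ) : K := ∑ i : Fin n, q⁻¹ ^ (n - 1 - (i : ℕ)) * q ^ (i : ℕ)

lemma En_mul_Fn_add_Fn_mul_En (n : ℕ) : En n * Fn n + Fn n * En n = qInt n • 1 := by
  have h := sum_smul_anticomm (fun i : Fin n => q⁻¹ ^ (n - 1 - (i : ℕ)))
    (fun i : Fin n => q ^ (i : ℕ)) (fermionOp n · 0) (fermionOp n · 1)
  simp only [fermionOp_anticomm, ← En_eq_sum, ← Fn_eq_sum] at h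
  rw [h, qInt, sum_smul]
  refine Finset.sum_congr rfl fun i _ => ?_
  simp

lemma qInt_ne_zero {n : ℕ} (hn : n ≠ 0) : qInt n ≠ 0 := by
  have hq : q ≠ 0 := RatFunc.X_ne_zero
  have hgeom : (∑ i : Fin n, (Polynomial.X ^ 2 : Polynomial ℂ) ^ (i : ℕ)) ≠ 0 := fun h =>
    hn (by simpa [Polynomial.eval_finsetSum] using congrArg (Polynomial.eval 1) h)
  have hscale : q ^ (n - 1) * qInt n =
      algebraMap (Polynomial ℂ) K (∑ i : Fin n, (Polynomial.X ^ 2) ^ (i : ℕ)) := by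
    rw [qInt, mul_sum, map_sum]
    refine Finset.sum_congr rfl fun i _ => ?_
    have hi : n - 1 = (n - 1 - i) + i := by omega
    rw [map_pow, map_pow, RatFunc.algebraMap_X, ← q, hi, pow_add, inv_pow, Nat.add_sub_cancel]
    field_simp
    ring
  intro h
  rw [h, mul_zero, eq_comm, map_eq_zero_iff _ (RatFunc.algebraMap_injective ℂ)] at hscale
  exact hgeom hscale

theorem ker_inf_eq_map_of_anticomm {R M : Type*} [Field R] [AddCommGroup M] [Module R M]
    {E F : Module.End R M} {c : R} (hc : c ≠ 0) (hEE : E * E = 0) (hEF : E * F + F * E = c • 1)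
    {P Q : Submodule R M} (hE : ∀ x ∈ Q, E x ∈ P) (hF : ∀ x ∈ P, F x ∈ Q) :
    LinearMap.ker E ⊓ P = Q.map E := by
  apply le_antisymm
  · rintro x ⟨hx : E x = 0, hxP⟩
    have hx' : E (F x) = c • x := by simpa [hx] using congr($hEF x)
    exact ⟨c⁻¹ • F x, Q.smul_mem _ (hF x hxP), by rw [map_smul, hx', inv_smul_smul₀ hc]⟩
  · rintro _ ⟨y, hy, rfl⟩
    exact ⟨show E (E y) = 0 from congr($hEE y), hE y hy⟩

theorem finrank_map_add_finrank_ker_inf {R M N : Type*} [DivisionRing R] [AddCommGroup M]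
    [Module R M] [AddCommGroup N] [Module R N] (f : M →ₗ[R] N) (Q : Submodule R M)
    [FiniteDimensional R Q] :
    finrank R (Q.map f) + finrank R ↥(LinearMap.ker f ⊓ Q) = finrank R Q := by
  have hker : LinearMap.ker (f.domRestrict Q) = (LinearMap.ker f ⊓ Q).comap Q.subtype := by
    rw [LinearMap.ker_domRestrict, Submodule.comap_inf, Submodule.comap_subtype_self, inf_top_eq]
  rw [← (f.domRestrict Q).finrank_range_add_finrank_ker, LinearMap.range_domRestrict, hker,
    (Submodule.comapSubtypeEquivOfLe inf_le_right).finrank_eq]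

lemma v_eq_single (n : ℕ) (α : Fin n → Fin 2) : v n α = Pi.single α 1 := by
  ext β
  simp [v, Pi.single_apply]

lemma mem_Tk_iff {n k : ℕ} {f : T n} : f ∈ Tk n k ↔ ∀ β, wt β ≠ k → f β = 0 := by
  constructor
  · intro hf
    induction hf using Submodule.span_induction with
    | mem g hg =>
      obtain ⟨α, rfl, rfl⟩ := hg
      intro β hβ
      simp [v_eq_single, ne_of_apply_ne wt hβ]
    | zero => simp
    | add g g' _ _ hg hg' => intro β hβ; simp [hg β hβ, hg' β hβ]
    | smul c g _ hg => intro β hβ; simp [hg β hβ]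
  · intro hf
    rw [← Finset.univ_sum_single f]
    refine Submodule.sum_mem _ fun α _ => ?_
    by_cases hα : wt α = k
    · rw [← mul_one (f α), ← smul_eq_mul, Pi.single_smul', ← v_eq_single]
      exact Submodule.smul_mem _ _ (Submodule.subset_span ⟨α, hα, rfl⟩)
    · rw [hf α hα, Pi.single_zero]
      exact zero_mem _

lemma card_filter_wt_eq (n k : ℕ) : #{α : Fin n → Fin 2 | wt α = k} = n.choose k := by
  have hind : ∀ s : Finset (Fin n),
      ({i | (if i ∈ s then 1 else 0 : Fin 2) = 1} : Finset _) = s := by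
    intro s
    ext i
    by_cases h : i ∈ s <;> simp [h]
  calc #{α : Fin n → Fin 2 | wt α = k} = #(powersetCard k (univ : Finset (Fin n))) := by
        refine card_nbij' (fun α => ({i | α i = 1} : Finset (Fin n)))
          (fun s i => if i ∈ s then 1 else 0) ?_ ?_ ?_ ?_
        · intro α hα
          rw [mem_coe, mem_filter] at hα
          simpa [wt, mem_powersetCard] using hα.2
        · intro s hs
          rw [mem_coe, mem_filter]
          simpa [wt, hind, mem_powersetCard] using hs
        · intro α _
          funext i
          obtain h | h : α i = 0 ∨ α i = 1 := by omega
          all_goals simp [h]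
        · intro s _
          exact hind s
    _ = n.choose k := by simp

lemma finrank_Tk (n k : ℕ) : finrank K (Tk n k) = n.choose k := by
  have hspan : Tk n k =
      Submodule.span K (Set.range fun α : {α : Fin n → Fin 2 // wt α = k} => v n α) := by
    rw [Tk]
    congr 1
    ext f
    simp [eq_comm]
  have hli : LinearIndependent K fun α : {α : Fin n → Fin 2 // wt α = k} => v n α := by
    simpa [Function.comp_def, v_eq_single] using
      (Pi.basisFun K (Fin n → Fin 2)).linearIndependent.comp Subtype.val Subtype.val_injective
  rw [hspan, finrank_span_eq_card hli, Fintype.card_subtype, card_filter_wt_eq]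

lemma fermionOp_zero_mem_Tk {n k : ℕ} (i : Fin n) {f : T n} (hf : f ∈ Tk n (k + 1)) :
    fermionOp n i 0 f ∈ Tk n k := by
  rw [mem_Tk_iff] at hf ⊢
  intro β hβ
  rw [fermionOp_apply]
  split_ifs with h
  · rw [hf _ (by rw [sub_zero, wt_update_one, ← h, update_eq_self]; omega), mul_zero]
  · rfl

lemma fermionOp_one_mem_Tk {n k : ℕ} (i : Fin n) {f : T n} (hf : f ∈ Tk n k) :
    fermionOp n i 1 f ∈ Tk n (k + 1) := by
  rw [mem_Tk_iff] at hf ⊢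
  intro β hβ
  rw [fermionOp_apply]
  split_ifs with h
  · have := wt_update_one β i
    rw [← h, update_eq_self] at this
    rw [hf _ (by rw [sub_self]; omega), mul_zero]
  · rfl

lemma Hk_eq_map (n k : ℕ) (hn : n ≠ 0) : Hk n k = (Tk n (k + 1)).map (En n) := by
  refine ker_inf_eq_map_of_anticomm (qInt_ne_zero hn) (En_mul_self n)
    (En_mul_Fn_add_Fn_mul_En n) (fun f hf => ?_) (fun f hf => ?_)
  · rw [En_eq_sum, LinearMap.coe_sum, Finset.sum_apply]
    exact Submodule.sum_mem _ fun i _ =>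
      Submodule.smul_mem _ _ (fermionOp_zero_mem_Tk i hf)
  · rw [Fn_eq_sum, LinearMap.coe_sum, Finset.sum_apply]
    exact Submodule.sum_mem _ fun i _ =>
      Submodule.smul_mem _ _ (fermionOp_one_mem_Tk i hf)

lemma finrank_Hk_add_finrank_Hk_succ (n k : ℕ) (hn : n ≠ 0) :
    finrank K (Hk n k) + finrank K (Hk n (k + 1)) = n.choose (k + 1) := by
  rw [Hk_eq_map n k hn, ← finrank_Tk]
  exact finrank_map_add_finrank_ker_inf (En n) (Tk n (k + 1))

lemma eq_choose_of_add_eq_choose_succ {d : ℕ → ℕ} {m : ℕ}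
    (h : ∀ k, d k + d (k + 1) = (m + 1).choose (k + 1)) (k : ℕ) : d k = m.choose k := by
  have step : ∀ k, d (k + 1) = m.choose (k + 1) → d k = m.choose k := fun k hk => by
    have := h k
    rw [Nat.choose_succ_succ', hk] at this
    omega
  have descend : ∀ j k, d (k + j) = m.choose (k + j) → d k = m.choose k := by
    intro j
    induction j with
    | zero => exact fun k => id
    | succ j ih => exact fun k hj => step k (ih (k + 1) (by rwa [add_right_comm, add_assoc]))
  apply descend (m + 1) k
  have := h (k + (m + 1))
  rw [Nat.choose_eq_zero_of_lt (by omega)] at this ⊢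
  omega

theorem stmt19_general (n k : ℕ) (hn : 2 ≤ n) :
    FiniteDimensional K ↥(Hk n k) ∧ Module.finrank K ↥(Hk n k) = Nat.choose (n - 1) k := by
  obtain ⟨m, rfl⟩ : ∃ m, n = m + 1 := ⟨n - 1, by omega⟩
  refine ⟨inferInstance, ?_⟩
  rw [Nat.add_sub_cancel]
  exact eq_choose_of_add_eq_choose_succ
    (fun j => finrank_Hk_add_finrank_Hk_succ (m + 1) j m.succ_ne_zero) k

theorem stmt19 (n k : ℕ) (hn : 2 ≤ n) (hk : k ≤ n - 1) :
    FiniteDimensional K ↥(Hk n k) ∧ Module.finrank K ↥(Hk n k) = Nat.choose (n - 1) k :=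
  stmt19_general n k hn

end
end
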